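/- arXiv:2405.08410 — 8 statements merged into one kernel-verified Lean document; each statement's English description precedes it below -/
import Mathlib

section
/- Let U and X be topological spaces with U Hausdorff and connected, and let F : U → X be a local homeomorphism. Suppose W ⊆ U is an open subset such that the restriction of F to W is a homeomorphism of W onto X. Then W = U, and consequently F itself is a homeomorphism of U onto X. -/
/-- If a local homeomorphism `F : U → X` from a Hausdorff connected space
restricts on an open subset `W` to a homeomorphism onto `X`, then `W = U` and `F` is a
homeomorphism. -/
theorem stmt_0 {U X : Type*} [TopologicalSpace U] [TopologicalSpace X]
    [T2Space U] [ConnectedSpace U]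
    (F : U → X) (hF : IsLocalHomeomorph F)
    (W : Set U) (hW : IsOpen W)
    (hrestr : IsHomeomorph (W.restrict F)) :
    W = Set.univ ∧ IsHomeomorph F := by
  obtain ⟨e, he⟩ := isHomeomorph_iff_exists_homeomorph.mp hrestr
  have hFc : Continuous F := hF.continuous
  -- W equals the equalizer of id and val ∘ e.symm ∘ F
  have hWeq : W = {u : U | ((e.symm (F u) : W) : U) = u} := by
    ext u
    constructor
    · intro hu
      have : e ⟨u, hu⟩ = F u := by
        have := congrFun he ⟨u, hu⟩
        simpa [Set.restrict] using this
      simp only [Set.mem_setOf_eq, ← this, Homeomorph.symm_apply_apply]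
    · intro hu
      have : ((e.symm (F u) : W) : U) ∈ W := (e.symm (F u)).2
      rwa [hu] at this
  have hclosed : IsClosed W := by
    rw [hWeq]
    exact isClosed_eq (continuous_subtype_val.comp (e.continuous_symm.comp hFc))
      continuous_id
  have hne : W.Nonempty := by
    obtain ⟨u⟩ := (inferInstance : Nonempty U)
    exact ⟨e.symm (F u), (e.symm (F u)).2⟩
  have huniv : W = Set.univ := IsClopen.eq_univ ⟨hclosed, hW⟩ hne
  refine ⟨huniv, ?_⟩
  subst huniv
  have hh : ⇑((Homeomorph.Set.univ U).symm.trans e) = F := by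
    funext u
    have := congrFun he ((Homeomorph.Set.univ U).symm u)
    simpa [Set.restrict] using this
  exact hh ▸ ((Homeomorph.Set.univ U).symm.trans e).isHomeomorph
end

section
/- Let n ≥ 2 and let x₀, x₁ be unit vectors in Euclidean space ℝⁿ and t₀, t₁ ∈ ℝ. Then the following are equivalent: (i) there exist continuously differentiable maps σ : ℝ → ℝⁿ and f : ℝ → ℝ with ‖σ(s)‖ = 1 for all s ∈ [0,1], σ(0) = x₀, σ(1) = x₁, f(0) = t₀, f(1) = t₁, and f′(s) ≥ ‖σ′(s)‖ for all s ∈ [0,1]; (ii) t₁ − t₀ ≥ arccos⟨x₀, x₁⟩. -/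
set_option maxHeartbeats 1000000

open scoped RealInnerProductSpace
open Set Filter Real Topology


-- MVT bound on arcsin
lemma my_arcsin_le_div {y : ℝ} (h0 : 0 ≤ y) (h1 : y < 1) :
    Real.arcsin y ≤ y / Real.sqrt (1 - y ^ 2) := by
  rcases eq_or_lt_of_le h0 with h | h
  · simp [← h]
  · obtain ⟨c, hc, hceq⟩ := exists_hasDerivAt_eq_slope Real.arcsin
      (fun t => 1 / Real.sqrt (1 - t ^ 2)) h
      (Real.continuous_arcsin.continuousOn)
      (fun t ht => Real.hasDerivAt_arcsin (by nlinarith [ht.1, ht.2])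
        (by nlinarith [ht.1, ht.2]))
    have hsy : (0:ℝ) < Real.sqrt (1 - y ^ 2) := Real.sqrt_pos.2 (by nlinarith)
    have hsc : Real.sqrt (1 - y ^ 2) ≤ Real.sqrt (1 - c ^ 2) :=
      Real.sqrt_le_sqrt (by nlinarith [hc.1, hc.2])
    have h1c : 1 / Real.sqrt (1 - c ^ 2) ≤ 1 / Real.sqrt (1 - y ^ 2) := by
      apply one_div_le_one_div_of_le hsy hsc
    have heq : Real.arcsin y = y * (1 / Real.sqrt (1 - c ^ 2)) := by
      rw [hceq]; field_simp; simp only [Real.arcsin_zero, sub_zero]; ring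
    calc Real.arcsin y = y * (1 / Real.sqrt (1 - c ^ 2)) := heq
      _ ≤ y * (1 / Real.sqrt (1 - y ^ 2)) := mul_le_mul_of_nonneg_left h1c h0
      _ = y / Real.sqrt (1 - y ^ 2) := by ring

-- arccos of inner product of unit vectors
lemma my_arccos_eq {E : Type*} [NormedAddCommGroup E] [InnerProductSpace ℝ E]
    {u v : E} (hu : ‖u‖ = 1) (hv : ‖v‖ = 1) :
    Real.arccos ⟪u, v⟫ = 2 * Real.arcsin (‖u - v‖ / 2) := by
  have hc2 : ‖u - v‖ ^ 2 = 2 - 2 * ⟪u, v⟫ := by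
    rw [norm_sub_sq_real, hu, hv]; ring
  set y := ‖u - v‖ / 2 with hy
  have hy0 : 0 ≤ y := by positivity
  have hy1 : y ≤ 1 := by
    have : ‖u - v‖ ≤ 2 := by
      calc ‖u - v‖ ≤ ‖u‖ + ‖v‖ := norm_sub_le _ _
      _ = 2 := by rw [hu, hv]; norm_num
    simp only [hy]; linarith
  have hiv : ⟪u, v⟫ = 1 - 2 * y ^ 2 := by
    have : ‖u - v‖ = 2 * y := by rw [hy]; ring
    rw [this] at hc2; nlinarith
  have ht0 : 0 ≤ Real.arcsin y := Real.arcsin_nonneg.2 hy0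
  have htpi : Real.arcsin y ≤ π / 2 := Real.arcsin_le_pi_div_two y
  have hcos : Real.cos (2 * Real.arcsin y) = 1 - 2 * y ^ 2 := by
    rw [Real.cos_two_mul', Real.cos_sq']
    rw [Real.sin_arcsin (by linarith) hy1]
    ring
  rw [hiv, ← hcos, Real.arccos_cos (by linarith) (by linarith)]

lemma my_exists_orth (n : ℕ) (hn : 2 ≤ n) (x₀ : EuclideanSpace ℝ (Fin n)) :
    ∃ u : EuclideanSpace ℝ (Fin n), ‖u‖ = 1 ∧ ⟪x₀, u⟫ = 0 := by
  have hne : (Submodule.span ℝ {x₀})ᗮ ≠ ⊥ := by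
    intro hbot
    have htop : Submodule.span ℝ {x₀} = ⊤ := Submodule.orthogonal_eq_bot_iff.1 hbot
    have h1 : Module.finrank ℝ (Submodule.span ℝ {x₀}) ≤ 1 := by
      rcases eq_or_ne x₀ 0 with h | h
      · rw [h, Set.singleton_zero, Submodule.span_zero]; simp
      · rw [show Submodule.span ℝ {x₀} = ℝ ∙ x₀ from rfl, finrank_span_singleton h]
    have h2 : Module.finrank ℝ (EuclideanSpace ℝ (Fin n)) = n := finrank_euclideanSpace_fin
    rw [htop, finrank_top, h2] at h1
    omega
  obtain ⟨v, hv, hv0⟩ := Submodule.ne_bot_iff _ |>.1 hne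
  refine ⟨‖v‖⁻¹ • v, ?_, ?_⟩
  · rw [norm_smul, norm_inv, norm_norm, inv_mul_cancel₀ (norm_ne_zero_iff.2 hv0)]
  · rw [real_inner_smul_right]
    have := (Submodule.mem_orthogonal _ v).1 hv x₀ (Submodule.mem_span_singleton_self x₀)
    rw [this, mul_zero]

lemma my_bwd (n : ℕ) (hn : 2 ≤ n)
    (x₀ x₁ : EuclideanSpace ℝ (Fin n)) (hx₀ : ‖x₀‖ = 1) (hx₁ : ‖x₁‖ = 1)
    (t₀ t₁ : ℝ) (h : t₁ - t₀ ≥ Real.arccos ⟪x₀, x₁⟫) :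
    (∃ (σ : ℝ → EuclideanSpace ℝ (Fin n)) (f : ℝ → ℝ),
        ContDiff ℝ 1 σ ∧ ContDiff ℝ 1 f ∧
        (∀ s ∈ Set.Icc (0 : ℝ) 1, ‖σ s‖ = 1) ∧
        σ 0 = x₀ ∧ σ 1 = x₁ ∧ f 0 = t₀ ∧ f 1 = t₁ ∧
        ∀ s ∈ Set.Icc (0 : ℝ) 1, deriv f s ≥ ‖deriv σ s‖) := by
  set θ := Real.arccos ⟪x₀, x₁⟫ with hθ
  have hθ0 : 0 ≤ θ := Real.arccos_nonneg _
  have hθπ : θ ≤ π := Real.arccos_le_pi _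
  have hip : |⟪x₀, x₁⟫| ≤ 1 := by
    have := abs_real_inner_le_norm x₀ x₁
    rwa [hx₀, hx₁, one_mul] at this
  have hcos : Real.cos θ = ⟪x₀, x₁⟫ :=
    Real.cos_arccos (by linarith [abs_le.1 hip]) (by linarith [abs_le.1 hip])
  have hw : ‖x₁ - Real.cos θ • x₀‖ ^ 2 = Real.sin θ ^ 2 := by
    have hcc : ⟪x₁, x₀⟫ = Real.cos θ := by
      rw [real_inner_comm]; exact hcos.symm
    rw [norm_sub_sq_real, real_inner_smul_right, norm_smul, hx₁, hx₀, hcc]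
    simp only [Real.norm_eq_abs, mul_one]
    nlinarith [Real.sin_sq_add_cos_sq θ, sq_abs (Real.cos θ)]
  -- obtain the orthonormal companion u
  obtain ⟨u, hu1, huo, hukey⟩ :
      ∃ u : EuclideanSpace ℝ (Fin n), ‖u‖ = 1 ∧ ⟪x₀, u⟫ = 0 ∧
        Real.sin θ • u = x₁ - Real.cos θ • x₀ := by
    by_cases hs : Real.sin θ = 0
    · obtain ⟨u, hu1, huo⟩ := my_exists_orth n hn x₀
      refine ⟨u, hu1, huo, ?_⟩
      have : ‖x₁ - Real.cos θ • x₀‖ ^ 2 = 0 := by rw [hw, hs]; ring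
      have h0 : x₁ - Real.cos θ • x₀ = 0 := by
        rwa [pow_eq_zero_iff (two_ne_zero), norm_eq_zero] at this
      rw [hs, h0, zero_smul]
    · have hsp : 0 < Real.sin θ :=
        lt_of_le_of_ne (Real.sin_nonneg_of_nonneg_of_le_pi hθ0 hθπ) (Ne.symm hs)
      refine ⟨(Real.sin θ)⁻¹ • (x₁ - Real.cos θ • x₀), ?_, ?_, ?_⟩
      · rw [norm_smul, norm_inv, Real.norm_eq_abs, abs_of_pos hsp]
        have hnrm : ‖x₁ - Real.cos θ • x₀‖ = Real.sin θ := by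
          nlinarith [norm_nonneg (x₁ - Real.cos θ • x₀), hw, hsp]
        rw [hnrm, inv_mul_cancel₀ hs]
      · rw [real_inner_smul_right, inner_sub_right, real_inner_smul_right,
          real_inner_self_eq_norm_sq, hx₀, hcos]
        ring
      · rw [smul_smul, mul_inv_cancel₀ hs, one_smul]
  -- define the curve
  refine ⟨fun s => Real.cos (s * θ) • x₀ + Real.sin (s * θ) • u,
    fun s => t₀ + s * (t₁ - t₀), ?_, ?_, ?_, ?_, ?_, ?_, ?_, ?_⟩
  · exact ((Real.contDiff_cos.comp ((contDiff_id).mul contDiff_const)).smul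
      contDiff_const).add ((Real.contDiff_sin.comp ((contDiff_id).mul
        contDiff_const)).smul contDiff_const)
  · exact contDiff_const.add ((contDiff_id).mul contDiff_const)
  · intro s _
    have hsq : ‖Real.cos (s * θ) • x₀ + Real.sin (s * θ) • u‖ ^ 2 = 1 := by
      rw [norm_add_sq_real, real_inner_smul_left, real_inner_smul_right, huo,
        norm_smul, norm_smul, hx₀, hu1]
      simp only [Real.norm_eq_abs, mul_one, mul_zero]
      have := Real.sin_sq_add_cos_sq (s * θ)
      nlinarith [sq_abs (Real.cos (s * θ)), sq_abs (Real.sin (s * θ))]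
    nlinarith [norm_nonneg (Real.cos (s * θ) • x₀ + Real.sin (s * θ) • u)]
  · simp
  · show Real.cos (1 * θ) • x₀ + Real.sin (1 * θ) • u = x₁
    rw [one_mul, hukey]; abel
  · simp
  · show t₀ + 1 * (t₁ - t₀) = t₁; ring
  · intro s _
    have hσd : HasDerivAt (fun s => Real.cos (s * θ) • x₀ + Real.sin (s * θ) • u)
        ((-Real.sin (s * θ) * θ) • x₀ + (Real.cos (s * θ) * θ) • u) s := by
      have h1 : HasDerivAt (fun s : ℝ => s * θ) θ s := hasDerivAt_mul_const θ
      exact (((Real.hasDerivAt_cos (s * θ)).comp s h1).smul_const x₀).add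
        (((Real.hasDerivAt_sin (s * θ)).comp s h1).smul_const u)
    have hfd : HasDerivAt (fun s : ℝ => t₀ + s * (t₁ - t₀)) (t₁ - t₀) s :=
      (hasDerivAt_mul_const (t₁ - t₀)).const_add t₀
    rw [hσd.deriv, hfd.deriv]
    have hnsq : ‖(-Real.sin (s * θ) * θ) • x₀ + (Real.cos (s * θ) * θ) • u‖ ^ 2
        = θ ^ 2 := by
      rw [norm_add_sq_real, real_inner_smul_left, real_inner_smul_right, huo,
        norm_smul, norm_smul, hx₀, hu1]
      simp only [Real.norm_eq_abs, mul_one, mul_zero]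
      have := Real.sin_sq_add_cos_sq (s * θ)
      nlinarith [sq_abs (-Real.sin (s * θ) * θ), sq_abs (Real.cos (s * θ) * θ)]
    have hn : ‖(-Real.sin (s * θ) * θ) • x₀ + (Real.cos (s * θ) * θ) • u‖ = θ := by
      nlinarith [norm_nonneg ((-Real.sin (s * θ) * θ) • x₀ + (Real.cos (s * θ) * θ) • u)]
    rw [hn]; linarith

lemma my_fwd (n : ℕ)
    (x₀ x₁ : EuclideanSpace ℝ (Fin n)) (hx₀ : ‖x₀‖ = 1) (hx₁ : ‖x₁‖ = 1)
    (t₀ t₁ : ℝ) (σ : ℝ → EuclideanSpace ℝ (Fin n)) (f : ℝ → ℝ)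
    (hσ : ContDiff ℝ 1 σ) (hf : ContDiff ℝ 1 f)
    (hsph : ∀ s ∈ Set.Icc (0 : ℝ) 1, ‖σ s‖ = 1)
    (hs0 : σ 0 = x₀) (hs1 : σ 1 = x₁) (hf0 : f 0 = t₀) (hf1 : f 1 = t₁)
    (hcaus : ∀ s ∈ Set.Icc (0 : ℝ) 1, deriv f s ≥ ‖deriv σ s‖) :
    t₁ - t₀ ≥ Real.arccos ⟪x₀, x₁⟫ := by
  have hσd : ∀ s, HasDerivAt σ (deriv σ s) s :=
    fun s => (hσ.differentiable one_ne_zero s).hasDerivAt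
  have hσ'c : Continuous (deriv σ) := hσ.continuous_deriv le_rfl
  have hf'c : Continuous (deriv f) := hf.continuous_deriv le_rfl
  set L : ℝ → ℝ := fun s => ∫ u in (0:ℝ)..s, ‖deriv σ u‖ with hLdef
  have hLd : ∀ s, HasDerivAt L (‖deriv σ s‖) s :=
    fun s => ((continuous_norm.comp hσ'c).integral_hasStrictDerivAt 0 s).hasDerivAt
  set A : ℝ → ℝ := fun s => Real.arccos ⟪x₀, σ s⟫ with hAdef
  have hAc : Continuous A := Real.continuous_arccos.comp
    (continuous_const.inner hσ.continuous)
  -- the key differential inequality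
  have key : ∀ x ∈ Set.Icc (0:ℝ) 1, A x ≤ L x := by
    apply image_le_of_liminf_slope_right_le_deriv_boundary hAc.continuousOn
    · -- A 0 ≤ L 0
      simp only [hAdef, hLdef]
      rw [hs0, real_inner_self_eq_norm_sq, hx₀, intervalIntegral.integral_same]
      norm_num [Real.arccos_one]
    · exact fun x _ => (hLd x).continuousAt.continuousWithinAt
    · exact fun x _ => (hLd x).hasDerivWithinAt
    · -- slope bound
      intro x hx r hr
      have hr0 : 0 < r := (norm_nonneg _).trans_lt hr
      have hxI : x ∈ Set.Icc (0:ℝ) 1 := Set.Ico_subset_Icc_self hx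
      have hσx : ‖σ x‖ = 1 := hsph x hxI
      have hφabs : |⟪x₀, σ x⟫| ≤ 1 := by
        have := abs_real_inner_le_norm x₀ (σ x)
        rwa [hx₀, hσx, one_mul] at this
      by_cases h1c : ⟪x₀, σ x⟫ = 1
      · -- σ x = x₀ : use the arcsin chord estimate
        have hσx0 : σ x = x₀ := by
          have hz : ‖x₀ - σ x‖ ^ 2 = 0 := by
            rw [norm_sub_sq_real, h1c, hx₀, hσx]; norm_num
          have := (pow_eq_zero_iff (two_ne_zero)).1 hz
          rw [norm_eq_zero, sub_eq_zero] at this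
          exact this.symm
        have hAx : A x = 0 := by
          simp only [hAdef]; rw [h1c, Real.arccos_one]
        -- limits
        have hslope : Tendsto (slope σ x) (𝓝[>] x) (𝓝 (deriv σ x)) :=
          (hasDerivAt_iff_tendsto_slope.1 (hσd x)).mono_left
            (nhdsWithin_mono _ (fun z hz => ne_of_gt hz))
        have hT1 : Tendsto (fun z => ‖σ z - σ x‖ / (z - x)) (𝓝[>] x)
            (𝓝 ‖deriv σ x‖) := by
          refine hslope.norm.congr' ?_
          filter_upwards [self_mem_nhdsWithin] with z hz
          have hzx : (0:ℝ) < z - x := sub_pos.2 hz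
          rw [slope, norm_smul, Real.norm_eq_abs, abs_inv, abs_of_pos hzx,
            vsub_eq_sub, div_eq_inv_mul]
        have hT2 : Tendsto (fun z => ‖σ z - σ x‖) (𝓝[>] x) (𝓝 0) := by
          have hc : Continuous fun z => ‖σ z - σ x‖ :=
            (hσ.continuous.sub continuous_const).norm
          have := (hc.tendsto x).mono_left (nhdsWithin_le_nhds (s := Set.Ioi x))
          simpa using this
        have hT3 : Tendsto (fun z => (Real.sqrt (1 - (‖σ z - σ x‖/2)^2))⁻¹)
            (𝓝[>] x) (𝓝 1) := by
          have hc : ContinuousAt (fun t : ℝ => (Real.sqrt (1 - (t/2)^2))⁻¹) 0 := by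
            apply ContinuousAt.inv₀
            · exact (Real.continuous_sqrt.comp (by continuity)).continuousAt
            · norm_num
          have := hc.tendsto.comp hT2
          norm_num at this
          exact this
        have hT : Tendsto (fun z => (‖σ z - σ x‖/(z-x)) *
            (Real.sqrt (1 - (‖σ z - σ x‖/2)^2))⁻¹) (𝓝[>] x) (𝓝 ‖deriv σ x‖) := by
          have := hT1.mul hT3
          simpa using this
        apply Filter.Eventually.frequently
        filter_upwards [hT.eventually_lt_const hr,
          Ioc_mem_nhdsGT_of_mem ⟨le_rfl, hx.2⟩,
          hT2.eventually_lt_const one_pos, self_mem_nhdsWithin]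
          with z hev1 hev2 hev3 hz
        have hzx : (0:ℝ) < z - x := sub_pos.2 hz
        have hzI : z ∈ Set.Icc (0:ℝ) 1 := ⟨le_trans hxI.1 hev2.1.le, hev2.2⟩
        have hAz : A z = 2 * Real.arcsin (‖σ z - σ x‖/2) := by
          simp only [hAdef]
          rw [my_arccos_eq hx₀ (hsph z hzI), norm_sub_rev x₀ (σ z), hσx0]
        set c := ‖σ z - σ x‖ with hc
        have hc0 : 0 ≤ c := norm_nonneg _
        have hc2 : c / 2 < 1 := by linarith
        have hc20 : 0 ≤ c / 2 := by linarith
        have hsq : (0:ℝ) < Real.sqrt (1 - (c/2)^2) :=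
          Real.sqrt_pos.2 (by nlinarith)
        have hAzle : A z ≤ c * (Real.sqrt (1 - (c/2)^2))⁻¹ := by
          rw [hAz]
          have := my_arcsin_le_div hc20 hc2
          rw [div_eq_mul_inv (c/2)] at this
          linarith
        rw [slope_def_field, hAx, sub_zero]
        calc A z / (z - x) ≤ (c * (Real.sqrt (1 - (c/2)^2))⁻¹) / (z - x) := by
              rw [div_le_div_iff_of_pos_right hzx]
              exact hAzle
          _ = (c / (z - x)) * (Real.sqrt (1 - (c/2)^2))⁻¹ := by ring
          _ < r := hev1
      · by_cases hm1 : ⟪x₀, σ x⟫ = -1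
        · -- A x = π is a maximum
          have hAx : A x = π := by simp only [hAdef]; rw [hm1, Real.arccos_neg_one]
          apply Filter.Eventually.frequently
          filter_upwards [self_mem_nhdsWithin] with z hz
          have hzx : (0:ℝ) < z - x := sub_pos.2 hz
          rw [slope_def_field, hAx]
          have : A z - π ≤ 0 := by
            have := Real.arccos_le_pi ⟪x₀, σ z⟫; simp only [hAdef]; linarith
          calc (A z - π) / (z - x) ≤ 0 :=
              div_nonpos_iff.2 (Or.inr ⟨this, hzx.le⟩)
            _ < r := hr0
        · -- interior case: A is differentiable at x
          have hlt : ⟪x₀, σ x⟫ ^ 2 < 1 := by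
            rcases abs_le.1 hφabs with ⟨hl, hu⟩
            have hl' : -1 < ⟪x₀, σ x⟫ := lt_of_le_of_ne hl (Ne.symm hm1)
            have hu' : ⟪x₀, σ x⟫ < 1 := lt_of_le_of_ne hu h1c
            nlinarith
          -- orthogonality of σ x and deriv σ x
          have horth : ⟪σ x, deriv σ x⟫ = 0 := by
            have hg : HasDerivAt (fun s => ⟪σ s, σ s⟫)
                (⟪σ x, deriv σ x⟫ + ⟪deriv σ x, σ x⟫) x :=
              HasDerivAt.inner ℝ (hσd x) (hσd x)
            have heq : Set.EqOn (fun s => ⟪σ s, σ s⟫) (fun _ => (1:ℝ))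
                (Set.Icc (0:ℝ) 1) := by
              intro s hs
              simp only [real_inner_self_eq_norm_sq, hsph s hs, one_pow]
            have hg0 : HasDerivWithinAt (fun s => ⟪σ s, σ s⟫) 0 (Set.Icc (0:ℝ) 1) x :=
              (hasDerivWithinAt_const x _ (1:ℝ)).congr heq (heq hxI)
            have huniq := (uniqueDiffOn_Icc (by norm_num : (0:ℝ) < 1)) x hxI
            have h2 := huniq.eq_deriv _ (hg.hasDerivWithinAt) hg0
            have h3 := real_inner_comm (σ x) (deriv σ x)
            linarith [h2, h3]
          -- the derivative bound
          have hip : HasDerivAt (fun s => ⟪x₀, σ s⟫) ⟪x₀, deriv σ x⟫ x := by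
            have := HasDerivAt.inner ℝ (hasDerivAt_const x x₀) (hσd x)
            simpa using this
          have hA' : HasDerivAt A
              (-(1 / Real.sqrt (1 - ⟪x₀, σ x⟫ ^ 2)) * ⟪x₀, deriv σ x⟫) x :=
            (Real.hasDerivAt_arccos hm1 h1c).comp (h₂ := Real.arccos) (h := fun s => ⟪x₀, σ s⟫) x hip
          have hwbound : |⟪x₀, deriv σ x⟫| ≤
              Real.sqrt (1 - ⟪x₀, σ x⟫ ^ 2) * ‖deriv σ x‖ := by
            set w := x₀ - ⟪x₀, σ x⟫ • σ x with hwdef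
            have hw1 : ⟪w, deriv σ x⟫ = ⟪x₀, deriv σ x⟫ := by
              rw [hwdef, inner_sub_left, real_inner_smul_left, horth]; ring
            have hw2 : ‖w‖ ^ 2 = 1 - ⟪x₀, σ x⟫ ^ 2 := by
              rw [hwdef, norm_sub_sq_real, real_inner_smul_right, norm_smul,
                hx₀, hσx]
              simp only [Real.norm_eq_abs, mul_one]
              nlinarith [sq_abs (⟪x₀, σ x⟫)]
            have hwnorm : ‖w‖ = Real.sqrt (1 - ⟪x₀, σ x⟫ ^ 2) := by
              rw [← hw2, Real.sqrt_sq (norm_nonneg w)]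
            calc |⟪x₀, deriv σ x⟫| = |⟪w, deriv σ x⟫| := by rw [hw1]
              _ ≤ ‖w‖ * ‖deriv σ x‖ := abs_real_inner_le_norm _ _
              _ = Real.sqrt (1 - ⟪x₀, σ x⟫ ^ 2) * ‖deriv σ x‖ := by rw [hwnorm]
          have hsq : (0:ℝ) < Real.sqrt (1 - ⟪x₀, σ x⟫ ^ 2) :=
            Real.sqrt_pos.2 (by linarith)
          have hle : -(1 / Real.sqrt (1 - ⟪x₀, σ x⟫ ^ 2)) * ⟪x₀, deriv σ x⟫
              ≤ ‖deriv σ x‖ := by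
            set S := Real.sqrt (1 - ⟪x₀, σ x⟫ ^ 2) with hS
            have hS0 : (0:ℝ) ≤ 1 / S := by positivity
            calc -(1 / S) * ⟪x₀, deriv σ x⟫ = (1 / S) * (-⟪x₀, deriv σ x⟫) := by
                  ring
              _ ≤ (1 / S) * |⟪x₀, deriv σ x⟫| :=
                  mul_le_mul_of_nonneg_left (neg_le_abs _) hS0
              _ ≤ (1 / S) * (S * ‖deriv σ x‖) :=
                  mul_le_mul_of_nonneg_left hwbound hS0
              _ = ‖deriv σ x‖ := by field_simp
          exact hA'.hasDerivWithinAt.liminf_right_slope_le (lt_of_le_of_lt hle hr)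
  -- conclude
  have h2 : A 1 ≤ L 1 := key 1 (by norm_num)
  have h3 : L 1 ≤ ∫ s in (0:ℝ)..1, deriv f s := by
    apply intervalIntegral.integral_mono_on (by norm_num)
      ((continuous_norm.comp hσ'c).intervalIntegrable 0 1)
      (hf'c.intervalIntegrable 0 1)
    exact fun s hs => hcaus s hs
  have h4 : (∫ s in (0:ℝ)..1, deriv f s) = f 1 - f 0 :=
    intervalIntegral.integral_deriv_eq_sub
      (fun s _ => (hf.differentiable one_ne_zero).differentiableAt)
      (hf'c.intervalIntegrable 0 1)
  have h5 : A 1 = Real.arccos ⟪x₀, x₁⟫ := by simp only [hAdef]; rw [hs1]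
  rw [ge_iff_le, ← h5]
  rw [h4, hf0, hf1] at h3
  linarith

open scoped RealInnerProductSpace

/-- On the cylinder `S^{n-1} × ℝ`, the point `(x₁,t₁)` lies in the causal
future of `(x₀,t₀)` (i.e. there is a future-directed causal `C¹` curve joining them,
expressed by `f' ≥ ‖σ'‖`) if and only if `t₁ - t₀ ≥ arccos ⟪x₀, x₁⟫`. -/
theorem stmt_2 (n : ℕ) (hn : 2 ≤ n)
    (x₀ x₁ : EuclideanSpace ℝ (Fin n)) (hx₀ : ‖x₀‖ = 1) (hx₁ : ‖x₁‖ = 1)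
    (t₀ t₁ : ℝ) :
    (∃ (σ : ℝ → EuclideanSpace ℝ (Fin n)) (f : ℝ → ℝ),
        ContDiff ℝ 1 σ ∧ ContDiff ℝ 1 f ∧
        (∀ s ∈ Set.Icc (0 : ℝ) 1, ‖σ s‖ = 1) ∧
        σ 0 = x₀ ∧ σ 1 = x₁ ∧ f 0 = t₀ ∧ f 1 = t₁ ∧
        ∀ s ∈ Set.Icc (0 : ℝ) 1, deriv f s ≥ ‖deriv σ s‖) ↔
      t₁ - t₀ ≥ Real.arccos ⟪x₀, x₁⟫ := by
  constructor
  · rintro ⟨σ, f, hσ, hf, hsph, hs0, hs1, hf0, hf1, hcaus⟩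
    exact my_fwd n x₀ x₁ hx₀ hx₁ t₀ t₁ σ f hσ hf hsph hs0 hs1 hf0 hf1 hcaus
  · exact my_bwd n hn x₀ x₁ hx₀ hx₁ t₀ t₁
end

section
/- Let n ≥ 2 and let x₀, x₁ be unit vectors in Euclidean space ℝⁿ and t₀, t₁ ∈ ℝ. Then the following are equivalent: (i) there exist continuously differentiable maps σ : ℝ → ℝⁿ and f : ℝ → ℝ with ‖σ(s)‖ = 1 for all s ∈ [0,1], σ(0) = x₀, σ(1) = x₁, f(0) = t₀, f(1) = t₁, and f′(s) > ‖σ′(s)‖ for all s ∈ [0,1]; (ii) t₁ − t₀ > arccos⟨x₀, x₁⟩. -/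
open scoped RealInnerProductSpace
open MeasureTheory intervalIntegral Set

set_option linter.unusedSectionVars false
set_option linter.deprecated false

variable {E : Type*} [NormedAddCommGroup E] [InnerProductSpace ℝ E]

-- norm from square
lemma norm_eq_of_sq (z : E) (r : ℝ) (hr : 0 ≤ r) (h : ‖z‖ ^ 2 = r ^ 2) : ‖z‖ = r := by
  have := Real.sqrt_sq (norm_nonneg z)
  rw [h, Real.sqrt_sq hr] at this
  exact this.symm

lemma norm_comb (x v : E) (hx : ‖x‖ = 1) (hv : ‖v‖ = 1) (ho : ⟪x, v⟫ = 0) (a b : ℝ) :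
    ‖a • x + b • v‖ ^ 2 = a ^ 2 + b ^ 2 := by
  rw [norm_add_sq_real, norm_smul, norm_smul, real_inner_smul_left, real_inner_smul_right, ho,
    hx, hv]
  simp [mul_pow, sq_abs]

-- existence of unit orthogonal vector
lemma exists_unit_orth {n : ℕ} (hn : 2 ≤ n) (x : EuclideanSpace ℝ (Fin n)) :
    ∃ v : EuclideanSpace ℝ (Fin n), ‖v‖ = 1 ∧ ⟪x, v⟫ = 0 := by
  set K := (ℝ ∙ x)ᗮ
  have hrank : Module.finrank ℝ (ℝ ∙ x) + Module.finrank ℝ K = n := by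
    rw [Submodule.finrank_add_finrank_orthogonal]
    simp [finrank_euclideanSpace_fin]
  have hspan : Module.finrank ℝ (ℝ ∙ x) ≤ 1 := by
    rcases eq_or_ne x 0 with rfl | hx0
    · rw [Submodule.span_zero_singleton, finrank_bot]; omega
    · rw [finrank_span_singleton hx0]
  have hK : 0 < Module.finrank ℝ K := by omega
  obtain ⟨w, hwK, hw0⟩ : ∃ w ∈ K, w ≠ 0 := by
    by_contra h
    push_neg at h
    have : K = ⊥ := by
      ext y; simp only [Submodule.mem_bot]
      constructor
      · intro hy; exact by_contra fun hne => hne (h y hy)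
      · rintro rfl; exact K.zero_mem
    rw [this, finrank_bot] at hK; omega
  refine ⟨‖w‖⁻¹ • w, ?_, ?_⟩
  · rw [norm_smul, norm_inv, norm_norm, inv_mul_cancel₀ (norm_ne_zero_iff.mpr hw0)]
  · rw [real_inner_smul_right]
    have := (Submodule.mem_orthogonal _ w).mp hwK x (Submodule.mem_span_singleton_self x)
    rw [this, mul_zero]

lemma exists_decomp {n : ℕ} (hn : 2 ≤ n) (x₀ x₁ : EuclideanSpace ℝ (Fin n))
    (hx₀ : ‖x₀‖ = 1) (hx₁ : ‖x₁‖ = 1) :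
    ∃ v : EuclideanSpace ℝ (Fin n), ‖v‖ = 1 ∧ ⟪x₀, v⟫ = 0 ∧
      x₁ = Real.cos (Real.arccos ⟪x₀, x₁⟫) • x₀ + Real.sin (Real.arccos ⟪x₀, x₁⟫) • v := by
  set c := ⟪x₀, x₁⟫ with hc
  have hcabs : |c| ≤ 1 := by
    have := abs_real_inner_le_norm x₀ x₁
    rwa [hx₀, hx₁, one_mul] at this
  have hcos : Real.cos (Real.arccos c) = c :=
    Real.cos_arccos (neg_le_of_abs_le hcabs) (le_of_abs_le hcabs)
  have hsin : Real.sin (Real.arccos c) = Real.sqrt (1 - c ^ 2) := Real.sin_arccos c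
  set w := x₁ - c • x₀ with hw
  have hxx : ⟪x₀, x₀⟫ = 1 := by
    rw [real_inner_self_eq_norm_sq, hx₀]; norm_num
  have hwo : ⟪x₀, w⟫ = 0 := by
    rw [hw, inner_sub_right, real_inner_smul_right, hxx, mul_one, ← hc, sub_self]
  have hwn : ‖w‖ = Real.sin (Real.arccos c) := by
    rw [hsin]
    have h2 : ‖w‖ ^ 2 = 1 - c ^ 2 := by
      have hcc : (⟪x₁, x₀⟫ : ℝ) = c := by rw [hc]; exact (real_inner_comm x₁ x₀).symm
      rw [hw, norm_sub_sq_real, real_inner_smul_right, norm_smul, hx₁, hx₀, hcc,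
        Real.norm_eq_abs, mul_one, sq_abs]
      ring
    rw [← h2, Real.sqrt_sq (norm_nonneg w)]
  rcases eq_or_ne w 0 with hw0 | hw0
  · obtain ⟨v, hv1, hv2⟩ := exists_unit_orth hn x₀
    refine ⟨v, hv1, hv2, ?_⟩
    have : Real.sin (Real.arccos c) = 0 := by rw [← hwn, hw0, norm_zero]
    rw [this, hcos, zero_smul, add_zero]
    have := hw0; rw [hw, sub_eq_zero] at this; exact this
  · refine ⟨‖w‖⁻¹ • w, ?_, ?_, ?_⟩
    · rw [norm_smul, norm_inv, norm_norm, inv_mul_cancel₀ (norm_ne_zero_iff.mpr hw0)]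
    · rw [real_inner_smul_right, hwo, mul_zero]
    · rw [hcos, ← hwn, smul_smul, mul_inv_cancel₀ (norm_ne_zero_iff.mpr hw0), one_smul, hw]
      abel

lemma construct {n : ℕ} (hn : 2 ≤ n) (x₀ x₁ : EuclideanSpace ℝ (Fin n))
    (hx₀ : ‖x₀‖ = 1) (hx₁ : ‖x₁‖ = 1) (t₀ t₁ : ℝ)
    (h : t₁ - t₀ > Real.arccos ⟪x₀, x₁⟫) :
    ∃ (σ : ℝ → EuclideanSpace ℝ (Fin n)) (f : ℝ → ℝ),
        ContDiff ℝ 1 σ ∧ ContDiff ℝ 1 f ∧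
        (∀ s ∈ Set.Icc (0 : ℝ) 1, ‖σ s‖ = 1) ∧
        σ 0 = x₀ ∧ σ 1 = x₁ ∧ f 0 = t₀ ∧ f 1 = t₁ ∧
        ∀ s ∈ Set.Icc (0 : ℝ) 1, deriv f s > ‖deriv σ s‖ := by
  obtain ⟨v, hv, hov, hdec⟩ := exists_decomp hn x₀ x₁ hx₀ hx₁
  set d := Real.arccos ⟪x₀, x₁⟫ with hd
  have hd0 : 0 ≤ d := Real.arccos_nonneg _
  refine ⟨fun s => Real.cos (d * s) • x₀ + Real.sin (d * s) • v,
          fun s => t₀ + s * (t₁ - t₀), ?_, ?_, ?_, ?_, ?_, ?_, ?_, ?_⟩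
  · exact ((Real.contDiff_cos.comp (contDiff_const.mul contDiff_id)).smul contDiff_const).add
      ((Real.contDiff_sin.comp (contDiff_const.mul contDiff_id)).smul contDiff_const)
  · exact contDiff_const.add (contDiff_id.mul contDiff_const)
  · intro s _
    apply norm_eq_of_sq _ _ zero_le_one
    rw [norm_comb x₀ v hx₀ hv hov, one_pow, Real.cos_sq_add_sin_sq]
  · simp
  · simpa using hdec.symm
  · simp
  · simp
  · intro s hs
    have hσd : HasDerivAt (fun s => Real.cos (d * s) • x₀ + Real.sin (d * s) • v)
        ((-Real.sin (d * s) * d) • x₀ + (Real.cos (d * s) * d) • v) s := by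
      have h1 : HasDerivAt (fun s : ℝ => d * s) d s := by
        simpa using (hasDerivAt_id s).const_mul d
      exact ((h1.cos).smul_const x₀).add ((h1.sin).smul_const v)
    have hfd : HasDerivAt (fun s : ℝ => t₀ + s * (t₁ - t₀)) (t₁ - t₀) s := by
      simpa using ((hasDerivAt_id s).mul_const (t₁ - t₀)).const_add t₀
    rw [hσd.deriv, hfd.deriv]
    have : ‖(-Real.sin (d * s) * d) • x₀ + (Real.cos (d * s) * d) • v‖ = d := by
      apply norm_eq_of_sq _ _ hd0
      rw [norm_comb x₀ v hx₀ hv hov]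
      ring_nf
      nlinarith [Real.sin_sq_add_cos_sq (d * s)]
    rw [this]; exact h



lemma key_dir (σ : ℝ → E) (f : ℝ → ℝ) (hσ : ContDiff ℝ 1 σ) (hf : ContDiff ℝ 1 f)
    (hsph : ∀ s ∈ Set.Icc (0:ℝ) 1, ‖σ s‖ = 1)
    (hlt : ∀ s ∈ Set.Icc (0:ℝ) 1, deriv f s > ‖deriv σ s‖) :
    f 1 - f 0 > Real.arccos ⟪σ 0, σ 1⟫ := by
  set x₀ := σ 0 with hx0def
  have hx₀ : ‖x₀‖ = 1 := hsph 0 (by norm_num)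
  set u : ℝ → ℝ := fun s => ⟪x₀, σ s⟫ with hu_def
  set u' : ℝ → ℝ := fun s => ⟪x₀, deriv σ s⟫ with hu'_def
  have hσd : ∀ s, HasDerivAt σ (deriv σ s) s :=
    fun s => (hσ.differentiable one_ne_zero s).hasDerivAt
  have hud : ∀ s, HasDerivAt u (u' s) s := by
    intro s
    have := (hasDerivAt_const s x₀).inner ℝ (hσd s)
    simpa [hu_def, hu'_def] using this
  have cσ' : Continuous (deriv σ) := hσ.continuous_deriv le_rfl
  have cf' : Continuous (deriv f) := hf.continuous_deriv le_rfl
  have cu : Continuous u := continuous_const.inner hσ.continuous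
  have cu' : Continuous u' := continuous_const.inner cσ'
  have hu_le : ∀ s ∈ Set.Icc (0:ℝ) 1, |u s| ≤ 1 := by
    intro s hs
    have := abs_real_inner_le_norm x₀ (σ s)
    rwa [hx₀, hsph s hs, one_mul] at this
  -- orthogonality in the interior
  have horth : ∀ s ∈ Set.Ioo (0:ℝ) 1, ⟪σ s, deriv σ s⟫ = 0 := by
    intro s hs
    have hq1 : HasDerivAt (fun t => (⟪σ t, σ t⟫ : ℝ))
        (⟪σ s, deriv σ s⟫ + ⟪deriv σ s, σ s⟫) s := (hσd s).inner ℝ (hσd s)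
    have hq2 : HasDerivAt (fun t => (⟪σ t, σ t⟫ : ℝ)) 0 s := by
      have hev : (fun t => (⟪σ t, σ t⟫ : ℝ)) =ᶠ[nhds s] fun _ => (1:ℝ) := by
        filter_upwards [Ioo_mem_nhds hs.1 hs.2] with t ht
        rw [real_inner_self_eq_norm_sq, hsph t (Set.Ioo_subset_Icc_self ht)]; norm_num
      exact (hasDerivAt_const s (1:ℝ)).congr_of_eventuallyEq hev
    have h0 := hq1.unique hq2
    have hcomm : (⟪deriv σ s, σ s⟫ : ℝ) = ⟪σ s, deriv σ s⟫ := real_inner_comm _ _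
    linarith
  -- the key pointwise bound
  have hbound : ∀ s ∈ Set.Ioo (0:ℝ) 1, |u' s| ≤ ‖deriv σ s‖ * Real.sqrt (1 - u s ^ 2) := by
    intro s hs
    have hs' := Set.Ioo_subset_Icc_self hs
    have h1 : u' s = ⟪x₀ - u s • σ s, deriv σ s⟫ := by
      rw [inner_sub_left, real_inner_smul_left, horth s hs, mul_zero, sub_zero]
    have h2 : ‖x₀ - u s • σ s‖ = Real.sqrt (1 - u s ^ 2) := by
      have hsq : ‖x₀ - u s • σ s‖ ^ 2 = 1 - u s ^ 2 := by
        rw [norm_sub_sq_real, real_inner_smul_right, norm_smul, hx₀, hsph s hs',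
          Real.norm_eq_abs, mul_one, sq_abs]
        have huu : (⟪x₀, σ s⟫ : ℝ) = u s := rfl
        rw [huu]; ring
      rw [← hsq, Real.sqrt_sq (norm_nonneg _)]
    rw [h1]
    calc |⟪x₀ - u s • σ s, deriv σ s⟫| ≤ ‖x₀ - u s • σ s‖ * ‖deriv σ s‖ :=
          abs_real_inner_le_norm _ _
      _ = ‖deriv σ s‖ * Real.sqrt (1 - u s ^ 2) := by rw [h2]; ring
  -- minimal time gap
  obtain ⟨s₀, hs₀, hmin⟩ := (isCompact_Icc (a := (0:ℝ)) (b := 1)).exists_isMinOn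
    (Set.nonempty_Icc.mpr zero_le_one)
    ((cf'.sub cσ'.norm).continuousOn)
  set ε := deriv f s₀ - ‖deriv σ s₀‖ with hε_def
  have hε : 0 < ε := sub_pos.mpr (hlt s₀ hs₀)
  have hεle : ∀ s ∈ Set.Icc (0:ℝ) 1, ε ≤ deriv f s - ‖deriv σ s‖ := fun s hs => hmin hs
  -- FTC for f
  have hftc : ∫ s in (0:ℝ)..1, deriv f s = f 1 - f 0 :=
    integral_eq_sub_of_hasDerivAt
      (fun s _ => (hf.differentiable one_ne_zero s).hasDerivAt) (cf'.intervalIntegrable _ _)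
  -- main estimate for each δ > 0
  have main : ∀ δ : ℝ, 0 < δ →
      Real.arccos (u 1 / (1 + δ)) - Real.arccos (u 0 / (1 + δ)) ≤ (f 1 - f 0) - ε := by
    intro δ hδ
    have h1δ : (0:ℝ) < 1 + δ := by linarith
    set ψ : ℝ → ℝ := fun s => Real.arccos (u s / (1 + δ)) with hψ_def
    set ψ' : ℝ → ℝ := fun s =>
      -(u' s) / ((1 + δ) * Real.sqrt (1 - (u s / (1 + δ)) ^ 2)) with hψ'_def
    have hA : ∀ s ∈ Set.Icc (0:ℝ) 1, 0 < 1 - (u s / (1 + δ)) ^ 2 := by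
      intro s hs
      have := hu_le s hs
      have h2 : |u s / (1 + δ)| < 1 := by
        rw [abs_div, abs_of_pos h1δ, div_lt_one h1δ]; linarith
      nlinarith [abs_nonneg (u s / (1+δ)), sq_abs (u s / (1+δ))]
    have hψd : ∀ s ∈ Set.Icc (0:ℝ) 1, HasDerivAt ψ (ψ' s) s := by
      intro s hs
      have h2 := hA s hs
      have hne1 : u s / (1 + δ) ≠ 1 := by intro h; rw [h] at h2; norm_num at h2
      have hne1' : u s / (1 + δ) ≠ -1 := by intro h; rw [h] at h2; norm_num at h2
      have harc := Real.hasDerivAt_arccos hne1' hne1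
      have hcomp := harc.comp s ((hud s).div_const (1 + δ))
      have hsq : Real.sqrt (1 - (u s / (1+δ))^2) ≠ 0 := by positivity
      refine HasDerivAt.congr_deriv hcomp ?_
      symm
      rw [hψ'_def]
      simp only
      set r := Real.sqrt (1 - (u s / (1+δ))^2) with hr
      rw [neg_div, neg_mul, div_mul_div_comm, one_mul, mul_comm r (1 + δ)]
    have hψ'cont : ContinuousOn ψ' (Set.uIcc (0:ℝ) 1) := by
      rw [Set.uIcc_of_le zero_le_one]
      apply ContinuousOn.div (cu'.neg.continuousOn)
      · exact (continuousOn_const.mul (((continuousOn_const.sub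
          ((cu.continuousOn.div_const _).pow 2))).sqrt))
      · intro s hs
        have := hA s hs
        positivity
    have hψint : IntervalIntegrable ψ' volume 0 1 := hψ'cont.intervalIntegrable
    have hftcψ : ∫ s in (0:ℝ)..1, ψ' s = ψ 1 - ψ 0 := by
      apply integral_eq_sub_of_hasDerivAt _ hψint
      intro s hs
      exact hψd s (by rwa [Set.uIcc_of_le zero_le_one] at hs)
    -- pointwise bound ψ' ≤ deriv f - ε on the interior
    have hae : ψ' ≤ᵐ[volume.restrict (Set.Icc (0:ℝ) 1)] fun s => deriv f s - ε := by
      have hres : volume.restrict (Set.Icc (0:ℝ) 1) = volume.restrict (Set.Ioo (0:ℝ) 1) :=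
        (Measure.restrict_congr_set (MeasureTheory.Ioo_ae_eq_Icc)).symm
      rw [hres]
      filter_upwards [ae_restrict_mem measurableSet_Ioo] with s hs
      have hs' := Set.Ioo_subset_Icc_self hs
      have hA' := hA s hs'
      have hsqA : 0 < Real.sqrt (1 - (u s / (1+δ))^2) := Real.sqrt_pos.mpr hA'
      have hden : 0 < (1 + δ) * Real.sqrt (1 - (u s / (1+δ))^2) := by positivity
      have hstep : Real.sqrt (1 - u s ^ 2) ≤ (1 + δ) * Real.sqrt (1 - (u s / (1+δ))^2) := by
        have : (1 + δ) * Real.sqrt (1 - (u s / (1+δ))^2)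
            = Real.sqrt ((1 + δ)^2 * (1 - (u s / (1+δ))^2)) := by
          rw [Real.sqrt_mul (by positivity), Real.sqrt_sq h1δ.le]
        rw [this]
        apply Real.sqrt_le_sqrt
        have expand : (1 + δ)^2 * (1 - (u s / (1+δ))^2) = (1+δ)^2 - u s ^ 2 := by
          field_simp
        rw [expand]
        nlinarith
      have habs : |ψ' s| ≤ ‖deriv σ s‖ := by
        rw [hψ'_def]
        simp only
        rw [abs_div, abs_neg, abs_of_pos hden, div_le_iff₀ hden]
        calc |u' s| ≤ ‖deriv σ s‖ * Real.sqrt (1 - u s ^ 2) := hbound s hs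
          _ ≤ ‖deriv σ s‖ * ((1 + δ) * Real.sqrt (1 - (u s / (1+δ))^2)) := by
              apply mul_le_mul_of_nonneg_left hstep (norm_nonneg _)
      have := hεle s hs'
      calc ψ' s ≤ |ψ' s| := le_abs_self _
        _ ≤ ‖deriv σ s‖ := habs
        _ ≤ deriv f s - ε := by linarith
    have hmono : ∫ s in (0:ℝ)..1, ψ' s ≤ ∫ s in (0:ℝ)..1, (deriv f s - ε) :=
      integral_mono_ae_restrict zero_le_one hψint
        ((cf'.sub continuous_const).intervalIntegrable _ _) hae
    have hrhs : ∫ s in (0:ℝ)..1, (deriv f s - ε) = (f 1 - f 0) - ε := by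
      rw [intervalIntegral.integral_sub (cf'.intervalIntegrable _ _)
        intervalIntegrable_const, hftc, intervalIntegral.integral_const]
      simp
    rw [hftcψ] at hmono
    rw [hrhs] at hmono
    exact hmono
  -- take the limit δ → 0⁺
  have hu0 : u 0 = 1 := by
    rw [hu_def]; simp only [hx0def]
    rw [real_inner_self_eq_norm_sq, hx₀]; norm_num
  have hlim : Filter.Tendsto
      (fun δ : ℝ => Real.arccos (u 1 / (1 + δ)) - Real.arccos (u 0 / (1 + δ)))
      (nhdsWithin 0 (Set.Ioi 0)) (nhds (Real.arccos (u 1) - Real.arccos (u 0))) := by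
    apply Filter.Tendsto.mono_left _ nhdsWithin_le_nhds
    have h1 : ContinuousAt (fun δ : ℝ => Real.arccos (u 1 / (1 + δ))) 0 := by
      apply Real.continuous_arccos.continuousAt.comp
      exact (continuousAt_const.div (continuousAt_const.add continuousAt_id) (by norm_num))
    have h2 : ContinuousAt (fun δ : ℝ => Real.arccos (u 0 / (1 + δ))) 0 := by
      apply Real.continuous_arccos.continuousAt.comp
      exact (continuousAt_const.div (continuousAt_const.add continuousAt_id) (by norm_num))
    have := (h1.sub h2).tendsto
    simpa [Pi.sub_def] using this
  have hfin : Real.arccos (u 1) - Real.arccos (u 0) ≤ (f 1 - f 0) - ε := by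
    apply le_of_tendsto hlim
    filter_upwards [self_mem_nhdsWithin] with δ hδ
    exact main δ hδ
  rw [hu0, Real.arccos_one, sub_zero] at hfin
  have : Real.arccos (u 1) = Real.arccos ⟪σ 0, σ 1⟫ := rfl
  rw [this] at hfin
  linarith

/-- On the cylinder `S^{n-1} × ℝ`, the point `(x₁,t₁)` lies in the
chronological future of `(x₀,t₀)` (i.e. there is a future-directed timelike `C¹` curve
joining them, expressed by `f' > ‖σ'‖`) if and only if `t₁ - t₀ > arccos ⟪x₀, x₁⟫`. -/
theorem stmt_3 (n : ℕ) (hn : 2 ≤ n)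
    (x₀ x₁ : EuclideanSpace ℝ (Fin n)) (hx₀ : ‖x₀‖ = 1) (hx₁ : ‖x₁‖ = 1)
    (t₀ t₁ : ℝ) :
    (∃ (σ : ℝ → EuclideanSpace ℝ (Fin n)) (f : ℝ → ℝ),
        ContDiff ℝ 1 σ ∧ ContDiff ℝ 1 f ∧
        (∀ s ∈ Set.Icc (0 : ℝ) 1, ‖σ s‖ = 1) ∧
        σ 0 = x₀ ∧ σ 1 = x₁ ∧ f 0 = t₀ ∧ f 1 = t₁ ∧
        ∀ s ∈ Set.Icc (0 : ℝ) 1, deriv f s > ‖deriv σ s‖) ↔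
      t₁ - t₀ > Real.arccos ⟪x₀, x₁⟫ := by
  constructor
  · rintro ⟨σ, f, hσ, hf, hsph, hσ0, hσ1, hf0, hf1, hlt⟩
    have := key_dir σ f hσ hf hsph hlt
    rwa [hσ0, hσ1, hf0, hf1] at this
  · exact construct hn x₀ x₁ hx₀ hx₁ t₀ t₁
end

section
/- Let n ≥ 2 and let p = (x₀, t₀) ∈ S^{n-1} × ℝ. Then the complement of the chronological future of p equals the causal past of α(p), and the complement of the causal future of p equals the chronological past of α(p); explicitly, {(x,t) ∈ S^{n-1} × ℝ : ¬(t − t₀ > arccos⟨x₀,x⟩)} = {(x,t) : (t₀ + π) − t ≥ arccos⟨−x₀,x⟩}, and {(x,t) : ¬(t − t₀ ≥ arccos⟨x₀,x⟩)} = {(x,t) : (t₀ + π) − t > arccos⟨−x₀,x⟩}. -/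
open scoped RealInnerProductSpace

/-- The unit sphere `S^{n-1}` in Euclidean space `ℝⁿ`. -/
noncomputable abbrev Sph (n : ℕ) : Type :=
  Metric.sphere (0 : EuclideanSpace ℝ (Fin n)) 1

/-- Spherical distance `d(x,y) = arccos ⟪x, y⟫`. -/
noncomputable def sdist {n : ℕ} (x y : Sph n) : ℝ :=
  Real.arccos ⟪(x : EuclideanSpace ℝ (Fin n)), (y : EuclideanSpace ℝ (Fin n))⟫

lemma sdist_neg_left {n : ℕ} (x y : Sph n) :
    sdist (-x) y = Real.pi - sdist x y := by
  simp [sdist, coe_neg_sphere, inner_neg_left, Real.arccos_neg]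

/-- On `S^{n-1} × ℝ`, for `p = (x₀,t₀)`: the complement of the
chronological future `I⁺(p)` is the causal past `J⁻(α·p)`, and the complement of the
causal future `J⁺(p)` is the chronological past `I⁻(α·p)`, where `α(x,t) = (-x, t+π)`. -/
theorem stmt_5 (n : ℕ) (hn : 2 ≤ n) (x₀ : Sph n) (t₀ : ℝ) :
    {q : Sph n × ℝ | ¬ q.2 - t₀ > sdist x₀ q.1} =
        {q : Sph n × ℝ | t₀ + Real.pi - q.2 ≥ sdist (-x₀) q.1} ∧
    {q : Sph n × ℝ | ¬ q.2 - t₀ ≥ sdist x₀ q.1} =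
        {q : Sph n × ℝ | t₀ + Real.pi - q.2 > sdist (-x₀) q.1} := by
  constructor <;> ext q <;>
    simp only [Set.mem_setOf_eq, sdist_neg_left, not_lt, not_le, ge_iff_le] <;>
    constructor <;> intro h <;> linarith
end

section
/- Let A be a Hausdorff topological space and B a metric space. Let φ : ℝ × A → A and ψ : ℝ × B → B be continuous flows (jointly continuous, with φ(0,·) = id, φ(s+t,·) = φ(s, φ(t,·)), and the same for ψ). Let δ : A → B be a local homeomorphism intertwining the flows: δ(φ(t,x)) = ψ(t, δ(x)) for all t and x. Let Δ ⊆ B be a closed set and suppose there is a continuous map ρ : B ∖ Δ → Δ such that for every compact K ⊆ B ∖ Δ, the maps ψ(t,·) converge to ρ uniformly on K as t → ∞. Let I be an open connected subset of the subspace δ⁻¹(Δ) ⊆ A. Then the set W⁺(I) = {x ∈ A ∖ δ⁻¹(Δ) : there exists p ∈ I with φ(t,x) → p as t → ∞} is open in A. -/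
open Filter Set Topology

/-- Let `δ : A → B` be a local homeomorphism intertwining continuous flows
`φ` on `A` and `ψ` on `B`. Suppose `Δ ⊆ B` is closed and `ψ(t,·)` converges uniformly on
compact subsets of `B ∖ Δ` to a continuous map `ρ : B ∖ Δ → Δ` as `t → ∞`. Then for any
relatively open connected subset `I` of `δ⁻¹(Δ)`, the basin
`W⁺(I) = {x ∉ δ⁻¹(Δ) : lim_{t→∞} φ(t,x) ∈ I}` is open in `A`. -/
theorem stmt_7 {A B : Type*} [TopologicalSpace A] [T2Space A] [MetricSpace B]
    (φ : ℝ → A → A) (ψ : ℝ → B → B)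
    (hφc : Continuous fun q : ℝ × A => φ q.1 q.2)
    (hψc : Continuous fun q : ℝ × B => ψ q.1 q.2)
    (hφ0 : ∀ x, φ 0 x = x) (hφadd : ∀ s t x, φ (s + t) x = φ s (φ t x))
    (hψ0 : ∀ z, ψ 0 z = z) (hψadd : ∀ s t z, ψ (s + t) z = ψ s (ψ t z))
    (δ : A → B) (hδ : IsLocalHomeomorph δ)
    (hint : ∀ t x, δ (φ t x) = ψ t (δ x))
    (Δ : Set B) (hΔ : IsClosed Δ)
    (ρ : B → B) (hρc : ContinuousOn ρ Δᶜ) (hρmaps : Set.MapsTo ρ Δᶜ Δ)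
    (hconv : ∀ K : Set B, K ⊆ Δᶜ → IsCompact K →
        TendstoUniformlyOn (fun t z => ψ t z) ρ Filter.atTop K)
    (I : Set A) (hI : I ⊆ δ ⁻¹' Δ)
    (hIopen : ∃ O : Set A, IsOpen O ∧ I = O ∩ δ ⁻¹' Δ)
    (hIconn : IsConnected I) :
    IsOpen {x : A | x ∉ δ ⁻¹' Δ ∧
        ∃ p ∈ I, Filter.Tendsto (fun t => φ t x) Filter.atTop (nhds p)} := by
  classical
  obtain ⟨O, hO, hIO⟩ := hIopen
  have hδc : Continuous δ := hδ.continuous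
  set Wset := {x : A | x ∉ δ ⁻¹' Δ ∧
      ∃ p ∈ I, Filter.Tendsto (fun t => φ t x) Filter.atTop (nhds p)} with hWdef
  rw [isOpen_iff_mem_nhds]
  rintro x ⟨hxΔ, p, hpI, hx⟩
  by_contra hW
  have hxΔ' : δ x ∈ Δᶜ := hxΔ
  have hpO : p ∈ O := by rw [hIO] at hpI; exact hpI.1
  -- chart at p, restricted to O
  obtain ⟨e, hpe, heq⟩ := hδ p
  set e' : OpenPartialHomeomorph A B := e.restrOpen O hO with he'def
  have hδe' : ∀ a, δ a = e' a := fun a => by rw [heq]; rfl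
  have hpe' : p ∈ e'.source := by
    rw [he'def, e.restrOpen_source]; exact ⟨hpe, hpO⟩
  have hδpV : δ p ∈ e'.target := by rw [hδe' p]; exact e'.map_source hpe'
  obtain ⟨ε, hε, hball⟩ := Metric.isOpen_iff.mp e'.open_target _ hδpV
  -- ρ (δ x) = δ p
  have h1 : Tendsto (fun t => ψ t (δ x)) atTop (𝓝 (δ p)) := by
    have := (hδc.tendsto p).comp hx
    simpa only [Function.comp_def, hint] using this
  have h2 : Tendsto (fun t => ψ t (δ x)) atTop (𝓝 (ρ (δ x))) :=
    (hconv {δ x} (singleton_subset_iff.mpr hxΔ') isCompact_singleton).tendsto_at rfl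
  have hρδx : ρ (δ x) = δ p := tendsto_nhds_unique h2 h1
  -- time after which the orbit of x is in the chart
  obtain ⟨T₀, hT₀⟩ := eventually_atTop.mp (hx (e'.open_source.mem_nhds hpe'))
  -- 𝓝 x is countably generated (chart at x into a metric space)
  obtain ⟨ex, hxex, hexq⟩ := hδ x
  have hmap : Filter.map ex.symm (𝓝 (ex x)) = 𝓝 x := ex.symm_map_nhds_eq hxex
  haveI : (𝓝 x).IsCountablyGenerated := by rw [← hmap]; infer_instance
  -- extract a sequence of bad points converging to x
  haveI hne : ((𝓝 x) ⊓ 𝓟 Wsetᶜ).NeBot := by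
    rw [inf_principal_neBot_iff]
    intro U hU
    rcases eq_empty_or_nonempty (U ∩ Wsetᶜ) with h | h
    · refine absurd (mem_of_superset hU fun w hw => ?_) hW
      by_contra hw'
      exact (eq_empty_iff_forall_notMem.mp h) w ⟨hw, hw'⟩
    · exact h
  obtain ⟨y, hy⟩ := Filter.exists_seq_tendsto ((𝓝 x) ⊓ 𝓟 Wsetᶜ)
  have hy1 : Tendsto y atTop (𝓝 x) := hy.mono_right inf_le_left
  have hy2 : ∀ᶠ n in atTop, y n ∉ Wset := tendsto_principal.mp (hy.mono_right inf_le_right)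
  have hδy : Tendsto (fun n => δ (y n)) atTop (𝓝 (δ x)) := (hδc.tendsto x).comp hy1
  have hyΔ : ∀ᶠ n in atTop, δ (y n) ∈ Δᶜ := hδy (hΔ.isOpen_compl.mem_nhds hxΔ')
  -- a compact subset of Δᶜ containing the relevant initial conditions
  set z : ℕ → B := fun n => if δ (y n) ∈ Δ then δ x else δ (y n) with hzdef
  have hzΔ : ∀ n, z n ∈ Δᶜ := fun n => by
    by_cases h : δ (y n) ∈ Δ
    · simp only [hzdef, if_pos h]; exact hxΔ'
    · simp only [hzdef, if_neg h]; exact h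
  have hzy : ∀ᶠ n in atTop, z n = δ (y n) := hyΔ.mono fun n h => by
    simp only [hzdef]; rw [if_neg h]
  have hztend : Tendsto z atTop (𝓝 (δ x)) :=
    Filter.Tendsto.congr' (hzy.mono fun _ h => h.symm) hδy
  have hK : IsCompact (insert (δ x) (Set.range z)) := hztend.isCompact_insert_range
  have hKΔ : insert (δ x) (Set.range z) ⊆ Δᶜ := by
    rintro w hw
    rcases hw with rfl | ⟨n, rfl⟩
    · exact hxΔ'
    · exact hzΔ n
  have hKconv := hconv _ hKΔ hK
  obtain ⟨T₁', hT₁'⟩ := eventually_atTop.mp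
    (Metric.tendstoUniformlyOn_iff.mp hKconv (ε/2) (by positivity))
  set T₁ := max T₁' T₀ with hT₁def
  -- ρ ∘ z → δ p
  have hρat : ContinuousAt ρ (δ x) := hρc.continuousAt (hΔ.isOpen_compl.mem_nhds hxΔ')
  have hρz : Tendsto (fun n => ρ (z n)) atTop (𝓝 (δ p)) := by
    have := hρat.tendsto.comp hztend
    rwa [hρδx] at this
  have hρzlt : ∀ᶠ n in atTop, dist (ρ (z n)) (δ p) < ε/2 :=
    Metric.tendsto_nhds.mp hρz (ε/2) (by positivity)
  -- eventually φ T₁ (y n) is in the chart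
  have hφT₁ : Continuous fun a => φ T₁ a := hφc.comp (continuous_const.prodMk continuous_id)
  have hφT₁x : φ T₁ x ∈ e'.source := hT₀ T₁ (le_max_right _ _)
  have hev : ∀ᶠ n in atTop, φ T₁ (y n) ∈ e'.source :=
    ((hφT₁.tendsto x).comp hy1) (e'.open_source.mem_nhds hφT₁x)
  -- pick a single good n
  obtain ⟨n, hbad, hnΔ, hnz, hnρ, hnφ⟩ :=
    (hy2.and (hyΔ.and (hzy.and (hρzlt.and hev)))).exists
  apply hbad
  -- notation
  set b := δ (y n) with hbdef
  have hbΔ : b ∈ Δᶜ := hnΔ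
  have hbK : b ∈ insert (δ x) (Set.range z) := by
    rw [← hnz]; exact mem_insert_of_mem _ ⟨n, rfl⟩
  have hρbd : dist (ρ b) (δ p) < ε/2 := by rw [← hnz]; exact hnρ
  -- the ψ-orbit of b stays in the target after time T₁
  have horb : ∀ t, T₁ ≤ t → ψ t b ∈ e'.target := by
    intro t ht
    apply hball
    rw [Metric.mem_ball]
    have h1 : dist (ρ b) (ψ t b) < ε/2 := hT₁' t (le_trans (le_max_left _ _) ht) b hbK
    calc dist (ψ t b) (δ p) ≤ dist (ψ t b) (ρ b) + dist (ρ b) (δ p) := dist_triangle _ _ _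
      _ < ε/2 + ε/2 := by rw [dist_comm (ψ t b) (ρ b)]; exact add_lt_add h1 hρbd
      _ = ε := by ring
  -- pointwise convergence of the ψ-orbit of b
  have hψb : Tendsto (fun t => ψ t b) atTop (𝓝 (ρ b)) := hKconv.tendsto_at hbK
  have hρbV : ρ b ∈ e'.target := hball (by rw [Metric.mem_ball]; linarith)
  -- uniqueness of lifts: on [T₁, ∞), φ t (y n) = e'.symm (ψ t b)
  haveI : PreconnectedSpace (Set.Ici T₁) := Subtype.preconnectedSpace isPreconnected_Ici
  set S : Set (Set.Ici T₁) := {t | φ t.1 (y n) = e'.symm (ψ t.1 b)} with hSdef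
  have hfcont : Continuous fun t : Set.Ici T₁ => φ t.1 (y n) :=
    (hφc.comp (continuous_id.prodMk continuous_const)).comp continuous_subtype_val
  have hψcont : Continuous fun t : Set.Ici T₁ => ψ t.1 b :=
    (hψc.comp (continuous_id.prodMk continuous_const)).comp continuous_subtype_val
  have hgcont : Continuous fun t : Set.Ici T₁ => e'.symm (ψ t.1 b) := by
    rw [continuous_iff_continuousAt]
    intro t
    exact ContinuousAt.comp (g := e'.symm) (f := fun s : Set.Ici T₁ => ψ s.1 b)
      (e'.continuousAt_symm (horb t.1 t.2)) hψcont.continuousAt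
  have hSclosed : IsClosed S := isClosed_eq hfcont hgcont
  have hSopen : IsOpen S := by
    rw [isOpen_iff_mem_nhds]
    intro t ht
    have h1 : φ t.1 (y n) ∈ e'.source := by
      have ht' : φ t.1 (y n) = e'.symm (ψ t.1 b) := ht
      rw [ht']
      exact e'.map_target (horb t.1 t.2)
    have h2 : ∀ᶠ s : Set.Ici T₁ in 𝓝 t, φ s.1 (y n) ∈ e'.source :=
      hfcont.continuousAt (e'.open_source.mem_nhds h1)
    refine h2.mono fun s hs => ?_
    have h3 : e' (φ s.1 (y n)) = ψ s.1 b := by rw [← hδe', hint]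
    show φ s.1 (y n) = e'.symm (ψ s.1 b)
    rw [← h3, e'.left_inv hs]
  have hSne : S.Nonempty := by
    refine ⟨⟨T₁, le_refl T₁⟩, ?_⟩
    show φ T₁ (y n) = e'.symm (ψ T₁ b)
    have h3 : e' (φ T₁ (y n)) = ψ T₁ b := by rw [← hδe', hint]
    rw [← h3, e'.left_inv hnφ]
  have hSuniv : S = univ := by
    rcases isClopen_iff.mp ⟨hSclosed, hSopen⟩ with h | h
    · exact absurd h (Set.nonempty_iff_ne_empty.mp hSne)
    · exact h
  have hagree : ∀ᶠ t in atTop, φ t (y n) = e'.symm (ψ t b) := by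
    filter_upwards [eventually_ge_atTop T₁] with t ht
    have : (⟨t, ht⟩ : Set.Ici T₁) ∈ S := hSuniv ▸ mem_univ _
    exact this
  -- the limit
  have hlim : Tendsto (fun t => φ t (y n)) atTop (𝓝 (e'.symm (ρ b))) := by
    refine Filter.Tendsto.congr' (hagree.mono fun _ h => h.symm) ?_
    exact ((e'.continuousAt_symm hρbV).tendsto).comp hψb
  have hq : e'.symm (ρ b) ∈ e'.source := e'.map_target hρbV
  have hqO : e'.symm (ρ b) ∈ O := by
    rw [he'def, e.restrOpen_source] at hq
    exact hq.2
  have hqΔ : δ (e'.symm (ρ b)) ∈ Δ := by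
    rw [hδe', e'.right_inv hρbV]
    exact hρmaps hbΔ
  have hqI : e'.symm (ρ b) ∈ I := by rw [hIO]; exact ⟨hqO, hqΔ⟩
  exact ⟨hnΔ, e'.symm (ρ b), hqI, hlim⟩
end

section
/- Let A and B be Hausdorff topological spaces, let φ : ℝ × A → A and ψ : ℝ × B → B be continuous flows (jointly continuous, with φ(0,·) = id, φ(s+t,·) = φ(s, φ(t,·)), and the same for ψ), and let δ : A → B be a local homeomorphism intertwining the flows: δ(φ(t,x)) = ψ(t, δ(x)) for all t and x. Let I ⊆ A and J ⊆ B be subsets such that δ maps I bijectively onto J. Define W = {x ∈ A : there exists p ∈ I with φ(t,x) → p as t → ∞} and Ω = {z ∈ B : there exists q ∈ J with ψ(t,z) → q as t → ∞}. Then δ restricted to W is a bijection from W onto Ω. -/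
/-- Let `δ : A → B` be a local homeomorphism between Hausdorff spaces
intertwining continuous flows `φ` on `A` and `ψ` on `B`, and suppose `δ` maps `I ⊆ A`
bijectively onto `J ⊆ B`. Then `δ` restricts to a bijection from the basin
`W = {x : ∃ p ∈ I, φ(t,x) → p}` onto the basin `Ω = {z : ∃ q ∈ J, ψ(t,z) → q}`. -/
theorem stmt_8 {A B : Type*} [TopologicalSpace A] [T2Space A]
    [TopologicalSpace B] [T2Space B]
    (φ : ℝ → A → A) (ψ : ℝ → B → B)
    (hφc : Continuous fun q : ℝ × A => φ q.1 q.2)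
    (hψc : Continuous fun q : ℝ × B => ψ q.1 q.2)
    (hφ0 : ∀ x, φ 0 x = x) (hφadd : ∀ s t x, φ (s + t) x = φ s (φ t x))
    (hψ0 : ∀ z, ψ 0 z = z) (hψadd : ∀ s t z, ψ (s + t) z = ψ s (ψ t z))
    (δ : A → B) (hδ : IsLocalHomeomorph δ)
    (hint : ∀ t x, δ (φ t x) = ψ t (δ x))
    (I : Set A) (J : Set B) (hbij : Set.BijOn δ I J) :
    Set.BijOn δ
      {x : A | ∃ p ∈ I, Filter.Tendsto (fun t => φ t x) Filter.atTop (nhds p)}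
      {z : B | ∃ q ∈ J, Filter.Tendsto (fun t => ψ t z) Filter.atTop (nhds q)} := by
  refine ⟨?_, ?_, ?_⟩
  · -- MapsTo
    rintro x ⟨p, hpI, hx⟩
    refine ⟨δ p, hbij.mapsTo hpI, ?_⟩
    have : Filter.Tendsto (fun t => δ (φ t x)) Filter.atTop (nhds (δ p)) :=
      (hδ.continuous.tendsto p).comp hx
    simpa only [hint] using this
  · -- InjOn
    rintro x ⟨p, hpI, hx⟩ y ⟨p', hp'I, hy⟩ hxy
    have d1 : Filter.Tendsto (fun t => δ (φ t x)) Filter.atTop (nhds (δ p)) :=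
      (hδ.continuous.tendsto p).comp hx
    have d2 : Filter.Tendsto (fun t => δ (φ t y)) Filter.atTop (nhds (δ p')) :=
      (hδ.continuous.tendsto p').comp hy
    have heq : (fun t => δ (φ t x)) = fun t => δ (φ t y) := by
      funext t; rw [hint, hint, hxy]
    rw [heq] at d1
    have hpp : p = p' := hbij.injOn hpI hp'I (tendsto_nhds_unique d1 d2)
    subst hpp
    obtain ⟨e, hpe, hde⟩ := hδ p
    have hex : ∀ᶠ t in Filter.atTop, φ t x ∈ e.source :=
      hx.eventually (e.open_source.mem_nhds hpe)
    have hey : ∀ᶠ t in Filter.atTop, φ t y ∈ e.source :=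
      hy.eventually (e.open_source.mem_nhds hpe)
    obtain ⟨t, htx, hty⟩ := (hex.and hey).exists
    have hφeq : φ t x = φ t y := by
      apply e.injOn htx hty
      have : δ (φ t x) = δ (φ t y) := by rw [hint, hint, hxy]
      rw [hde] at this; exact this
    calc x = φ 0 x := (hφ0 x).symm
      _ = φ (-t + t) x := by norm_num
      _ = φ (-t) (φ t x) := hφadd _ _ _
      _ = φ (-t) (φ t y) := by rw [hφeq]
      _ = φ (-t + t) y := (hφadd _ _ _).symm
      _ = φ 0 y := by norm_num
      _ = y := hφ0 y
  · -- SurjOn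
    rintro z ⟨q, hqJ, hz⟩
    obtain ⟨p, hpI, rfl⟩ := hbij.surjOn hqJ
    obtain ⟨e, hpe, hde⟩ := hδ p
    have hqT : δ p ∈ e.target := by rw [hde]; exact e.map_source hpe
    have hev : ∀ᶠ t in Filter.atTop, ψ t z ∈ e.target :=
      hz.eventually (e.open_target.mem_nhds hqT)
    obtain ⟨T, hT⟩ := Filter.eventually_atTop.mp hev
    set x₀ : A := e.symm (ψ T z) with hx₀
    have hδx₀ : δ x₀ = ψ T z := by
      rw [hde]; exact e.right_inv (hT T le_rfl)
    -- key: for s ≥ 0, φ s x₀ = e.symm (ψ (T + s) z)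
    have hmem : ∀ s : Set.Ici (0:ℝ), ψ (T + s.1) z ∈ e.target := fun s =>
      hT _ (by have h := Set.mem_Ici.mp s.2; linarith)
    haveI : PreconnectedSpace (Set.Ici (0:ℝ)) :=
      Subtype.preconnectedSpace (isPreconnected_Ici)
    have contG : Continuous fun s : Set.Ici (0:ℝ) => φ s.1 x₀ :=
      hφc.comp (continuous_subtype_val.prodMk continuous_const)
    have contInner : Continuous fun s : Set.Ici (0:ℝ) => ψ (T + s.1) z :=
      hψc.comp ((continuous_const.add continuous_subtype_val).prodMk continuous_const)
    have contH : Continuous fun s : Set.Ici (0:ℝ) => e.symm (ψ (T + s.1) z) :=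
      e.continuousOn_symm.comp_continuous contInner hmem
    have hδG : ∀ s : Set.Ici (0:ℝ), δ (φ s.1 x₀) = ψ (T + s.1) z := by
      intro s
      rw [hint, hδx₀, ← hψadd, add_comm]
    have hδH : ∀ s : Set.Ici (0:ℝ), δ (e.symm (ψ (T + s.1) z)) = ψ (T + s.1) z := by
      intro s
      rw [hde]; exact e.right_inv (hmem s)
    have hclopen : IsClopen {s : Set.Ici (0:ℝ) |
        φ s.1 x₀ = e.symm (ψ (T + s.1) z)} := by
      constructor
      · exact isClosed_eq contG contH
      · rw [isOpen_iff_mem_nhds]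
        intro s₀ hs₀
        obtain ⟨e', he'1, he'2⟩ := hδ (φ s₀.1 x₀)
        have hHs₀ : e.symm (ψ (T + s₀.1) z) ∈ e'.source := by
          rw [← hs₀]; exact he'1
        have hU : {s : Set.Ici (0:ℝ) | φ s.1 x₀ ∈ e'.source ∧
            e.symm (ψ (T + s.1) z) ∈ e'.source} ∈ nhds s₀ := by
          apply Filter.inter_mem
          · exact contG.continuousAt.preimage_mem_nhds (e'.open_source.mem_nhds he'1)
          · exact contH.continuousAt.preimage_mem_nhds (e'.open_source.mem_nhds hHs₀)
        filter_upwards [hU] with s hs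
        apply e'.injOn hs.1 hs.2
        have h1 := hδG s
        have h2 := hδH s
        rw [he'2] at h1 h2
        rw [h1, h2]
    have hne : (⟨0, Set.self_mem_Ici⟩ : Set.Ici (0:ℝ)) ∈ {s : Set.Ici (0:ℝ) |
        φ s.1 x₀ = e.symm (ψ (T + s.1) z)} := by
      show φ (0:ℝ) x₀ = e.symm (ψ (T + (0:ℝ)) z)
      rw [hφ0, add_zero]
    have huniv := hclopen.eq_univ ⟨_, hne⟩
    have key : ∀ s : ℝ, 0 ≤ s → φ s x₀ = e.symm (ψ (T + s) z) := by
      intro s hs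
      have : (⟨s, hs⟩ : Set.Ici (0:ℝ)) ∈ (Set.univ : Set (Set.Ici (0:ℝ))) := trivial
      rw [← huniv] at this
      exact this
    refine ⟨φ (-T) x₀, ⟨p, hpI, ?_⟩, ?_⟩
    · -- tendsto
      have hsymm : ContinuousAt e.symm (δ p) :=
        e.continuousOn_symm.continuousAt (e.open_target.mem_nhds hqT)
      have hlim : Filter.Tendsto (fun t => e.symm (ψ t z)) Filter.atTop (nhds p) := by
        have := hsymm.tendsto.comp hz
        have hep : e.symm (δ p) = p := by
          rw [hde]; exact e.left_inv hpe
        rw [hep] at this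
        exact this
      refine hlim.congr' ?_
      filter_upwards [Filter.eventually_ge_atTop T] with t ht
      have h0 : (0:ℝ) ≤ t + -T := by linarith
      have : φ (t + -T) x₀ = e.symm (ψ (T + (t + -T)) z) := key _ h0
      rw [hφadd] at this
      have harg : T + (t + -T) = t := by ring
      rw [harg] at this
      exact this.symm
    · -- δ x = z
      rw [hint, hδx₀, ← hψadd]
      simp [hψ0]
end

section
/- Let n ≥ 2 and work in S^{n-1} × ℝ with the causal relation ≼, chronological relation ≺, and the map α(x,t) = (−x, t+π). Let p₀ ∈ S^{n-1} × ℝ and let γ : S^{n-1} × ℝ → S^{n-1} × ℝ be a bijection satisfying: γ(p) ≼ γ(q) ⟺ p ≼ q and γ(p) ≺ γ(q) ⟺ p ≺ q for all p, q; and γ ∘ α = α ∘ γ. Suppose q₀ satisfies α⁻¹(p₀) ≺ q₀ ≺ α(p₀), that (1) q₀ ≺ γ(q₀), and that (2) γⁱ(q₀) → α(p₀) as i → +∞ and γⁱ(q₀) → α⁻¹(p₀) as i → −∞ (limits in the product topology on S^{n-1} × ℝ). Set D = J⁺(q₀) ∩ I⁻(α(γ(q₀))). Then the sets γⁱ(D),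 i ∈ ℤ, are pairwise disjoint, and their union over all i ∈ ℤ equals I⁺(α⁻¹(p₀)) ∩ I⁻(α²(p₀)). -/
open scoped RealInnerProductSpace

/-- The causal relation `p ≼ q` on `S^{n-1} × ℝ`. -/
noncomputable def creq {n : ℕ} (p q : Sph n × ℝ) : Prop := sdist p.1 q.1 ≤ q.2 - p.2

/-- The chronological relation `p ≺ q` on `S^{n-1} × ℝ`. -/
noncomputable def clt {n : ℕ} (p q : Sph n × ℝ) : Prop := sdist p.1 q.1 < q.2 - p.2

/-- The deck transformation `α(x,t) = (-x, t + π)`, as a permutation of the cylinder. -/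
noncomputable def amap (n : ℕ) : Equiv.Perm (Sph n × ℝ) where
  toFun p := (-p.1, p.2 + Real.pi)
  invFun p := (-p.1, p.2 - Real.pi)
  left_inv p := by cases p; simp
  right_inv p := by cases p; simp


section TriIneq

variable {F : Type*} [NormedAddCommGroup F] [InnerProductSpace ℝ F]

lemma key_inner_ge {x y z : F} (hx : ‖x‖ = 1) (hy : ‖y‖ = 1) (hz : ‖z‖ = 1) :
    ⟪x, y⟫ * ⟪y, z⟫ - Real.sqrt (1 - ⟪x, y⟫ ^ 2) * Real.sqrt (1 - ⟪y, z⟫ ^ 2) ≤ ⟪x, z⟫ := by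
  set u := x - ⟪x, y⟫ • y with hu
  set v := z - ⟪y, z⟫ • y with hv
  have hyy : ⟪y, y⟫ = 1 := by rw [real_inner_self_eq_norm_sq, hy]; norm_num
  have hxx : ⟪x, x⟫ = 1 := by rw [real_inner_self_eq_norm_sq, hx]; norm_num
  have hzz : ⟪z, z⟫ = 1 := by rw [real_inner_self_eq_norm_sq, hz]; norm_num
  have huv : ⟪u, v⟫ = ⟪x, z⟫ - ⟪x, y⟫ * ⟪y, z⟫ := by
    simp only [hu, hv, inner_sub_left, inner_sub_right, real_inner_smul_left,
      real_inner_smul_right, hyy, real_inner_comm y x, real_inner_comm z y]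
    ring
  have hnu : ‖u‖ = Real.sqrt (1 - ⟪x, y⟫ ^ 2) := by
    have huu : ⟪u, u⟫ = 1 - ⟪x, y⟫ ^ 2 := by
      simp only [hu, inner_sub_left, inner_sub_right, real_inner_smul_left,
        real_inner_smul_right, hyy, hxx, real_inner_comm y x]
      ring
    rw [← Real.sqrt_sq (norm_nonneg u), ← real_inner_self_eq_norm_sq, huu]
  have hnv : ‖v‖ = Real.sqrt (1 - ⟪y, z⟫ ^ 2) := by
    have hvv : ⟪v, v⟫ = 1 - ⟪y, z⟫ ^ 2 := by
      simp only [hv, inner_sub_left, inner_sub_right, real_inner_smul_left,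
        real_inner_smul_right, hyy, hzz, real_inner_comm z y]
      ring
    rw [← Real.sqrt_sq (norm_nonneg v), ← real_inner_self_eq_norm_sq, hvv]
  have habs := abs_real_inner_le_norm u v
  rw [hnu, hnv] at habs
  have := neg_le_of_abs_le habs
  rw [huv] at this
  linarith

lemma arccos_inner_triangle {x y z : F} (hx : ‖x‖ = 1) (hy : ‖y‖ = 1) (hz : ‖z‖ = 1) :
    Real.arccos ⟪x, z⟫ ≤ Real.arccos ⟪x, y⟫ + Real.arccos ⟪y, z⟫ := by
  have hbnd : ∀ p q : F, ‖p‖ = 1 → ‖q‖ = 1 → -1 ≤ ⟪p, q⟫ ∧ ⟪p, q⟫ ≤ 1 := by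
    intro p q hp hq
    have := abs_real_inner_le_norm p q
    rw [hp, hq, one_mul] at this
    exact abs_le.mp this
  obtain ⟨ha1, ha2⟩ := hbnd x y hx hy
  obtain ⟨hb1, hb2⟩ := hbnd y z hy hz
  obtain ⟨hc1, hc2⟩ := hbnd x z hx hz
  by_cases hπ : Real.pi ≤ Real.arccos ⟪x, y⟫ + Real.arccos ⟪y, z⟫
  · exact (Real.arccos_le_pi _).trans hπ
  push_neg at hπ
  have hA0 := Real.arccos_nonneg ⟪x, y⟫
  have hB0 := Real.arccos_nonneg ⟪y, z⟫
  have hcos : Real.cos (Real.arccos ⟪x, y⟫ + Real.arccos ⟪y, z⟫) ≤ ⟪x, z⟫ := by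
    rw [Real.cos_add, Real.cos_arccos ha1 ha2, Real.cos_arccos hb1 hb2,
      Real.sin_arccos, Real.sin_arccos]
    exact key_inner_ge hx hy hz
  by_contra hlt
  push_neg at hlt
  have hmem1 : Real.arccos ⟪x, y⟫ + Real.arccos ⟪y, z⟫ ∈ Set.Icc 0 Real.pi :=
    ⟨by positivity, hπ.le⟩
  have hmem2 : Real.arccos ⟪x, z⟫ ∈ Set.Icc 0 Real.pi :=
    ⟨Real.arccos_nonneg _, Real.arccos_le_pi _⟩
  have := Real.strictAntiOn_cos hmem1 hmem2 hlt
  rw [Real.cos_arccos hc1 hc2] at this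
  linarith

end TriIneq

section SdistLemmas

variable {n : ℕ}

lemma norm_coe_sph (x : Sph n) : ‖(x : EuclideanSpace ℝ (Fin n))‖ = 1 := by
  have := x.2
  rwa [mem_sphere_zero_iff_norm] at this

lemma sdist_nonneg' (x y : Sph n) : 0 ≤ sdist x y := Real.arccos_nonneg _

lemma sdist_le_pi' (x y : Sph n) : sdist x y ≤ Real.pi := Real.arccos_le_pi _

lemma sdist_self' (x : Sph n) : sdist x x = 0 := by
  rw [sdist, real_inner_self_eq_norm_sq, norm_coe_sph, one_pow, Real.arccos_one]

lemma sdist_comm' (x y : Sph n) : sdist x y = sdist y x := by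
  rw [sdist, sdist, real_inner_comm]

lemma sdist_triangle' (x y z : Sph n) : sdist x z ≤ sdist x y + sdist y z :=
  arccos_inner_triangle (norm_coe_sph x) (norm_coe_sph y) (norm_coe_sph z)

lemma sdist_neg_right' (x y : Sph n) : sdist x (-y) = Real.pi - sdist x y := by
  rw [sdist, sdist, coe_neg_sphere, inner_neg_right, Real.arccos_neg]

lemma creq_refl {p : Sph n × ℝ} : creq p p := by
  rw [creq, sdist_self']; simp

lemma creq_trans {p q r : Sph n × ℝ} (h1 : creq p q) (h2 : creq q r) : creq p r := by
  have := sdist_triangle' p.1 q.1 r.1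
  rw [creq] at *; linarith

lemma clt_creq_trans {p q r : Sph n × ℝ} (h1 : clt p q) (h2 : creq q r) : clt p r := by
  have := sdist_triangle' p.1 q.1 r.1
  rw [clt] at *; rw [creq] at h2; linarith

lemma creq_clt_trans {p q r : Sph n × ℝ} (h1 : creq p q) (h2 : clt q r) : clt p r := by
  have := sdist_triangle' p.1 q.1 r.1
  rw [clt] at *; rw [creq] at h1; linarith

lemma clt_creq {p q : Sph n × ℝ} (h : clt p q) : creq p q := le_of_lt h

lemma clt_amap_iff (x r : Sph n × ℝ) : clt x (amap n r) ↔ ¬ creq r x := by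
  show sdist x.1 (-r.1) < r.2 + Real.pi - x.2 ↔ ¬ (sdist r.1 x.1 ≤ x.2 - r.2)
  rw [sdist_neg_right', sdist_comm', not_le]
  constructor <;> intro h <;> linarith

lemma amap_creq (p q : Sph n × ℝ) : creq (amap n p) (amap n q) ↔ creq p q := by
  show sdist (-p.1) (-q.1) ≤ q.2 + Real.pi - (p.2 + Real.pi) ↔ _
  rw [show sdist (-p.1) (-q.1) = sdist p.1 q.1 by
    rw [sdist, sdist, coe_neg_sphere, coe_neg_sphere, inner_neg_neg]]
  rw [creq]
  constructor <;> intro h <;> linarith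

lemma continuous_sdist' : Continuous (fun p : Sph n × Sph n => sdist p.1 p.2) :=
  Real.continuous_arccos.comp
    ((continuous_subtype_val.comp continuous_fst).inner
      (continuous_subtype_val.comp continuous_snd))

end SdistLemmas
section MoreHelpers

variable {n : ℕ}

theorem Equiv.Perm.apply_inv_self {α : Type*} (f : Equiv.Perm α) (x : α) : f (f⁻¹ x) = x :=
  f.apply_symm_apply x

/-- The subgroup of causality-preserving permutations. -/
noncomputable def presGrp (n : ℕ) : Subgroup (Equiv.Perm (Sph n × ℝ)) where
  carrier := {f | ∀ p q, (creq (f p) (f q) ↔ creq p q) ∧ (clt (f p) (f q) ↔ clt p q)}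
  one_mem' := by intro p q; simp
  mul_mem' := by
    intro f g hf hg p q
    exact ⟨((hf (g p) (g q)).1).trans (hg p q).1, ((hf (g p) (g q)).2).trans (hg p q).2⟩
  inv_mem' := by
    intro f hf p q
    constructor
    · rw [← (hf (f⁻¹ p) (f⁻¹ q)).1, Equiv.Perm.apply_inv_self, Equiv.Perm.apply_inv_self]
    · rw [← (hf (f⁻¹ p) (f⁻¹ q)).2, Equiv.Perm.apply_inv_self, Equiv.Perm.apply_inv_self]

lemma zpow_pres {γ : Equiv.Perm (Sph n × ℝ)}
    (hceq : ∀ p q, creq (γ p) (γ q) ↔ creq p q)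
    (hclt : ∀ p q, clt (γ p) (γ q) ↔ clt p q) (i : ℤ) (p q : Sph n × ℝ) :
    (creq ((γ ^ i) p) ((γ ^ i) q) ↔ creq p q) ∧ (clt ((γ ^ i) p) ((γ ^ i) q) ↔ clt p q) :=
  (presGrp n).zpow_mem (fun p q => ⟨hceq p q, hclt p q⟩) i p q

lemma zpow_comm_amap {γ : Equiv.Perm (Sph n × ℝ)}
    (hcomm : ∀ p, γ (amap n p) = amap n (γ p)) (i : ℤ) (p : Sph n × ℝ) :
    (γ ^ i) (amap n p) = amap n ((γ ^ i) p) := by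
  have hc : Commute γ (amap n) := Equiv.ext hcomm
  exact Equiv.ext_iff.mp (hc.zpow_left i) p

lemma continuous_sdist_right (c : Sph n) :
    Continuous fun x : Sph n × ℝ => sdist c x.1 := by
  unfold sdist
  exact Real.continuous_arccos.comp
    (continuous_const.inner (continuous_subtype_val.comp continuous_fst))

lemma continuous_sdist_left (c : Sph n) :
    Continuous fun x : Sph n × ℝ => sdist x.1 c := by
  unfold sdist
  exact Real.continuous_arccos.comp
    ((continuous_subtype_val.comp continuous_fst).inner continuous_const)

lemma isClosed_creq_right (c : Sph n × ℝ) : IsClosed {x : Sph n × ℝ | creq c x} :=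
  isClosed_le (continuous_sdist_right c.1) (continuous_snd.sub continuous_const)

lemma isClosed_creq_left (c : Sph n × ℝ) : IsClosed {x : Sph n × ℝ | creq x c} :=
  isClosed_le (continuous_sdist_left c.1) (continuous_const.sub continuous_snd)

lemma isOpen_clt_left (c : Sph n × ℝ) : IsOpen {x : Sph n × ℝ | clt x c} :=
  isOpen_lt (continuous_sdist_left c.1) (continuous_const.sub continuous_snd)

lemma isOpen_not_creq_left (c : Sph n × ℝ) : IsOpen {x : Sph n × ℝ | ¬ creq x c} := by
  have h : {x : Sph n × ℝ | ¬ creq x c} = {x : Sph n × ℝ | c.2 - x.2 < sdist x.1 c.1} := by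
    ext x; simp [creq, not_le]
  rw [h]
  exact isOpen_lt (continuous_const.sub continuous_snd) (continuous_sdist_left c.1)

lemma amap_sq_apply (p : Sph n × ℝ) : (amap n ^ 2) p = amap n (amap n p) := by
  rw [sq, Equiv.Perm.mul_apply]

end MoreHelpers

/-- (Lemma 4.4 of the paper.) If a causality-preserving bijection `γ` of
the cylinder commutes with `α`, `q₀` lies in `Min⁻(p₀) = I⁺(α⁻¹ p₀) ∩ I⁻(α p₀)` with
`q₀ ≺ γ q₀`, and `γⁱ q₀ → α p₀` as `i → +∞`, `γⁱ q₀ → α⁻¹ p₀` as `i → -∞`, then the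
sets `γⁱ(D)`, `D = J⁺(q₀) ∩ I⁻(α γ q₀)`, are pairwise disjoint with union
`I⁺(α⁻¹ p₀) ∩ I⁻(α² p₀)`. -/
theorem stmt_9 (n : ℕ) (hn : 2 ≤ n) (p₀ q₀ : Sph n × ℝ)
    (γ : Equiv.Perm (Sph n × ℝ))
    (hceq : ∀ p q, creq (γ p) (γ q) ↔ creq p q)
    (hclt : ∀ p q, clt (γ p) (γ q) ↔ clt p q)
    (hcomm : ∀ p, γ (amap n p) = amap n (γ p))
    (hq₀ : clt ((amap n)⁻¹ p₀) q₀ ∧ clt q₀ (amap n p₀))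
    (h1 : clt q₀ (γ q₀))
    (h2top : Filter.Tendsto (fun i : ℤ => (γ ^ i) q₀) Filter.atTop
      (nhds (amap n p₀)))
    (h2bot : Filter.Tendsto (fun i : ℤ => (γ ^ i) q₀) Filter.atBot
      (nhds ((amap n)⁻¹ p₀))) :
    (∀ i j : ℤ, i ≠ j →
        Disjoint (⇑(γ ^ i) '' {q | creq q₀ q ∧ clt q (amap n (γ q₀))})
          (⇑(γ ^ j) '' {q | creq q₀ q ∧ clt q (amap n (γ q₀))})) ∧
      (⋃ i : ℤ, ⇑(γ ^ i) '' {q | creq q₀ q ∧ clt q (amap n (γ q₀))}) =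
        {q | clt ((amap n)⁻¹ p₀) q} ∩ {q | clt q ((amap n ^ 2) p₀)} := by
  classical
  have hpres := zpow_pres hceq hclt
  have hci := zpow_comm_amap hcomm
  have hq1 : ∀ i : ℤ, (γ ^ i) (γ q₀) = (γ ^ (i + 1)) q₀ := by
    intro i
    rw [zpow_add_one, Equiv.Perm.mul_apply]
  have hchain : ∀ i : ℤ, clt ((γ ^ i) q₀) ((γ ^ (i + 1)) q₀) := by
    intro i
    rw [← hq1 i]
    exact (hpres i q₀ (γ q₀)).2.mpr h1
  have hmono : ∀ i j : ℤ, i < j → clt ((γ ^ i) q₀) ((γ ^ j) q₀) := by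
    intro i j hij
    have key : ∀ j : ℤ, i + 1 ≤ j → clt ((γ ^ i) q₀) ((γ ^ j) q₀) := by
      refine Int.le_induction (hchain i) ?_
      intro k _ hk
      exact clt_creq_trans hk (clt_creq (hchain k))
    exact key j (by omega)
  have hmono' : ∀ i j : ℤ, i ≤ j → creq ((γ ^ i) q₀) ((γ ^ j) q₀) := by
    intro i j hij
    rcases eq_or_lt_of_le hij with h | h
    · rw [h]; exact creq_refl
    · exact clt_creq (hmono i j h)
  have hhi : ∀ i : ℤ, creq ((γ ^ i) q₀) (amap n p₀) := by
    intro i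
    refine (isClosed_creq_right ((γ ^ i) q₀)).mem_of_tendsto h2top ?_
    filter_upwards [Filter.eventually_ge_atTop i] with j hj
    exact hmono' i j hj
  have hlo : ∀ i : ℤ, creq ((amap n)⁻¹ p₀) ((γ ^ i) q₀) := by
    intro i
    refine (isClosed_creq_left ((γ ^ i) q₀)).mem_of_tendsto h2bot ?_
    filter_upwards [Filter.eventually_le_atBot i] with j hj
    exact hmono' j i hj
  have hmem : ∀ (i : ℤ) (x : Sph n × ℝ),
      x ∈ ⇑(γ ^ i) '' {q | creq q₀ q ∧ clt q (amap n (γ q₀))} ↔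
        creq ((γ ^ i) q₀) x ∧ clt x (amap n ((γ ^ (i + 1)) q₀)) := by
    intro i x
    constructor
    · rintro ⟨y, ⟨hy1, hy2⟩, rfl⟩
      refine ⟨(hpres i q₀ y).1.mpr hy1, ?_⟩
      have := (hpres i y (amap n (γ q₀))).2.mpr hy2
      rwa [hci i (γ q₀), hq1 i] at this
    · rintro ⟨h1x, h2x⟩
      refine ⟨(γ ^ i)⁻¹ x, ⟨?_, ?_⟩, Equiv.Perm.apply_inv_self _ _⟩
      · rw [← (hpres i q₀ ((γ ^ i)⁻¹ x)).1, Equiv.Perm.apply_inv_self]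
        exact h1x
      · rw [← (hpres i ((γ ^ i)⁻¹ x) (amap n (γ q₀))).2, Equiv.Perm.apply_inv_self,
          hci i (γ q₀), hq1 i]
        exact h2x
  constructor
  · have key : ∀ i j : ℤ, i < j →
        Disjoint (⇑(γ ^ i) '' {q | creq q₀ q ∧ clt q (amap n (γ q₀))})
          (⇑(γ ^ j) '' {q | creq q₀ q ∧ clt q (amap n (γ q₀))}) := by
      intro i j hij
      rw [Set.disjoint_left]
      intro x hxi hxj
      rw [hmem i x] at hxi
      rw [hmem j x] at hxj
      have hcr : creq ((γ ^ (i + 1)) q₀) x :=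
        creq_trans (hmono' (i + 1) j (by omega)) hxj.1
      exact (clt_amap_iff x ((γ ^ (i + 1)) q₀)).mp hxi.2 hcr
    intro i j hij
    rcases lt_or_gt_of_ne hij with h | h
    · exact key i j h
    · exact (key j i h).symm
  · ext x
    simp only [Set.mem_iUnion, Set.mem_inter_iff, Set.mem_setOf_eq]
    constructor
    · rintro ⟨i, hx⟩
      rw [hmem i x] at hx
      constructor
      · have hlt : clt ((amap n)⁻¹ p₀) ((γ ^ i) q₀) :=
          creq_clt_trans (hlo (i - 1)) (hmono (i - 1) i (by omega))
        exact clt_creq_trans hlt hx.1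
      · have h2 : creq (amap n ((γ ^ (i + 1)) q₀)) ((amap n ^ 2) p₀) := by
          rw [amap_sq_apply]
          exact (amap_creq _ _).mpr (hhi (i + 1))
        exact clt_creq_trans hx.2 h2
    · rintro ⟨hx1, hx2⟩
      have hmemU : (amap n)⁻¹ p₀ ∈ {y : Sph n × ℝ | clt y x} := hx1
      obtain ⟨i₀, hi₀⟩ := (h2bot.eventually ((isOpen_clt_left x).mem_nhds hmemU)).exists
      have hi₀' : creq ((γ ^ i₀) q₀) x := clt_creq hi₀
      have hmemV : amap n p₀ ∈ {y : Sph n × ℝ | ¬ creq y x} := by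
        rw [amap_sq_apply] at hx2
        exact (clt_amap_iff x (amap n p₀)).mp hx2
      obtain ⟨k, hk⟩ := (h2top.eventually ((isOpen_not_creq_left x).mem_nhds hmemV)).exists
      have hbdd : ∃ b : ℤ, ∀ z : ℤ, creq ((γ ^ z) q₀) x → z ≤ b := by
        refine ⟨k, fun z hz => ?_⟩
        by_contra hzk
        push_neg at hzk
        exact hk (creq_trans (hmono' k z hzk.le) hz)
      obtain ⟨i, hiP, hiub⟩ := Int.exists_greatest_of_bdd hbdd ⟨i₀, hi₀'⟩
      refine ⟨i, (hmem i x).mpr ⟨hiP, ?_⟩⟩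
      rw [clt_amap_iff]
      intro hcon
      have := hiub (i + 1) hcon
      omega
end

section
/- Let k ≥ 1 and let θ : ℝ^{2k} → ℝ^{2k} be a linear map with no real eigenvalues (for every r ∈ ℝ, θ − r·id is injective). Let a, b, c, d ∈ ℝ satisfy ad − bc = 1 and (a + d)² ≥ 4. Suppose the linear map T : ℝ^{2k} × ℝ^{2k} → ℝ^{2k} × ℝ^{2k}, T(u, v) = (a·u + b·v, c·u + d·v), maps the graph {(u, θ(u)) : u ∈ ℝ^{2k}} into itself. Then b = 0, c = 0, and a = d; in particular a = d = 1 or a = d = −1, so T = ± identity. -/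
/-- Let `θ : ℝ^{2k} → ℝ^{2k}` be linear with no real eigenvalues, and let
`T(u,v) = (a u + b v, c u + d v)` with `ad - bc = 1` and `(a+d)² ≥ 4` map the graph of
`θ` into itself. Then `b = 0`, `c = 0`, `a = d`, and `a = d = 1` or `a = d = -1`. -/
theorem stmt_19 (k : ℕ) (hk : 1 ≤ k)
    (θ : (Fin (2 * k) → ℝ) →ₗ[ℝ] (Fin (2 * k) → ℝ))
    (hθ : ∀ (r : ℝ) (u : Fin (2 * k) → ℝ), θ u = r • u → u = 0)
    (a b c d : ℝ) (hdet : a * d - b * c = 1) (htr : (a + d) ^ 2 ≥ 4)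
    (hgraph : ∀ u : Fin (2 * k) → ℝ, θ (a • u + b • θ u) = c • u + d • θ u) :
    b = 0 ∧ c = 0 ∧ a = d ∧ ((a = 1 ∧ d = 1) ∨ (a = -1 ∧ d = -1)) := by
  have hpos : 0 < 2 * k := by omega
  set i₀ : Fin (2 * k) := ⟨0, hpos⟩ with hi₀
  set u₀ : Fin (2 * k) → ℝ := fun _ => 1 with hu₀def
  have hu₀ : u₀ ≠ 0 := by
    intro h
    have := congrFun h i₀
    simp [hu₀def] at this
  -- quadratic identity
  have hq : ∀ u, b • θ (θ u) = c • u + (d - a) • θ u := by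
    intro u
    have h := hgraph u
    rw [map_add, map_smul, map_smul] at h
    have : b • θ (θ u) = c • u + d • θ u - a • θ u := by
      rw [← h]; abel
    rw [this]
    rw [sub_smul]; abel
  have hb : b = 0 := by
    by_contra hb
    set s : ℝ := (d - a) / b with hs
    set p : ℝ := -c / b with hp
    have hb2 : (0 : ℝ) < b ^ 2 := by positivity
    have key : (d - a) ^ 2 + 4 * (b * c) ≥ 0 := by nlinarith
    have hdisc : 0 ≤ s ^ 2 - 4 * p := by
      have heq : s ^ 2 - 4 * p = ((d - a) ^ 2 + 4 * (b * c)) / b ^ 2 := by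
        rw [hs, hp]
        field_simp
        ring
      rw [heq]
      exact div_nonneg key hb2.le
    set q : ℝ := Real.sqrt (s ^ 2 - 4 * p) with hqdef
    have hq2 : q ^ 2 = s ^ 2 - 4 * p := Real.sq_sqrt hdisc
    set r₁ : ℝ := (s + q) / 2 with hr₁
    set r₂ : ℝ := (s - q) / 2 with hr₂
    have hsum : r₁ + r₂ = s := by rw [hr₁, hr₂]; ring
    have hprod : r₁ * r₂ = p := by
      have : r₁ * r₂ = (s ^ 2 - q ^ 2) / 4 := by rw [hr₁, hr₂]; ring
      rw [this, hq2]; ring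
    -- θ² = (c/b) • id + s • θ
    have hsq : ∀ u, θ (θ u) = (c / b) • u + s • θ u := by
      intro u
      have h := hq u
      have h2 : b⁻¹ • (b • θ (θ u)) = b⁻¹ • (c • u + (d - a) • θ u) := by rw [h]
      rw [smul_smul, inv_mul_cancel₀ hb, one_smul, smul_add, smul_smul, smul_smul] at h2
      rw [h2, hs]
      congr 1 <;> congr 1 <;> field_simp
    have hall : ∀ u : Fin (2 * k) → ℝ, u = 0 := by
      intro u
      set v : Fin (2 * k) → ℝ := θ u - r₂ • u with hv
      have hθv : θ v = r₁ • v := by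
        rw [hv, map_sub, map_smul, hsq u, smul_sub, smul_smul, hprod]
        have hcb : c / b = -p := by rw [hp]; ring
        rw [hcb]
        have hsr : s = r₁ + r₂ := hsum.symm
        rw [hsr]
        module
      have hv0 : v = 0 := hθ r₁ v hθv
      have : θ u = r₂ • u := by
        have := sub_eq_zero.mp hv0
        exact this
      exact hθ r₂ u this
    exact hu₀ (hall u₀)
  -- now b = 0
  subst hb
  have hlin : ∀ u, (a - d) • θ u = c • u := by
    intro u
    have h := hgraph u
    rw [zero_smul, add_zero, map_smul] at h
    have : a • θ u - d • θ u = c • u := by rw [h]; abel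
    rw [← this, sub_smul]
  have had : a = d := by
    by_contra had
    have hne : a - d ≠ 0 := sub_ne_zero.mpr had
    have hall : ∀ u : Fin (2 * k) → ℝ, u = 0 := by
      intro u
      apply hθ ((a - d)⁻¹ * c) u
      have h := hlin u
      have h2 : (a - d)⁻¹ • ((a - d) • θ u) = (a - d)⁻¹ • (c • u) := by rw [h]
      rw [smul_smul, inv_mul_cancel₀ hne, one_smul, smul_smul] at h2
      exact h2
    exact hu₀ (hall u₀)
  have hc : c = 0 := by
    have h := hlin u₀
    rw [had, sub_self, zero_smul] at h
    have := congrFun h.symm i₀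
    simpa [hu₀def] using this
  refine ⟨rfl, hc, had, ?_⟩
  have ha2 : a * a = 1 := by
    rw [hc] at hdet
    rw [← had] at hdet
    linarith
  have : (a - 1) * (a + 1) = 0 := by nlinarith
  rcases mul_eq_zero.mp this with h | h
  · left
    have ha : a = 1 := by linarith
    exact ⟨ha, had ▸ ha⟩
  · right
    have ha : a = -1 := by linarith
    exact ⟨ha, had ▸ ha⟩
end
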